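/- arXiv:1411.2044 — 8 statements merged into one kernel-verified Lean document; each statement's English description precedes it below -/
import Mathlib

section
/- Fix k ≥ 2. Define F(q) = ∏_{m≥1, m≢2 (mod 4)} (1 − q^m), and for j ≥ 0, 1 ≤ i ≤ k, define G̃_{j,i}(q) = (1/F(q)) ∑_{n≥0} [(-1)^n q^{4k·C(n,2)+(2k(j+1)+2i-1)n} (1−q^{2(n+1)})⋯(1−q^{2(n+j)}) / ((1+q^{2n+1})(1+q^{2n+3})⋯(1+q^{2(n+j)+1}))] · (1 − q^{2(k-i+1)(2n+j+1)} + q^{2(n+j)+1}(1 − q^{2(k-i)(2n+j+1)})). Then for all j ≥ 0, G̃_{j,k}(q) = G̃_{j+1,1}(q). -/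
open PowerSeries Finset

/-- Truncation-based formal infinite product `∏_{m, P m} (1 - q^m)` in `ℚ⟦q⟧`
(valid when `P m → 1 ≤ m`). -/
noncomputable def sProd (P : ℕ → Prop) [DecidablePred P] : PowerSeries ℚ :=
  PowerSeries.mk fun d =>
    PowerSeries.coeff d (∏ m ∈ (Finset.range (d + 1)).filter P, (1 - PowerSeries.X ^ m))

/-- Truncation-based formal infinite sum `∑_{n ≥ 0} f n` in `ℚ⟦q⟧`
(valid when the order of `f n` is at least `n`). -/
noncomputable def sSum (f : ℕ → PowerSeries ℚ) : PowerSeries ℚ :=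
  PowerSeries.mk fun d =>
    PowerSeries.coeff d (∑ n ∈ Finset.range (d + 1), f n)

/-- `F(q) = ∏_{m ≥ 1, m ≢ 2 (mod 4)} (1 - q^m)`. -/
noncomputable def Fq : PowerSeries ℚ := sProd (fun m => 1 ≤ m ∧ m % 4 ≠ 2)

/-- The closed-form series `G̃_{j,i}(q)` of the Göllnitz–Gordon–Andrews setting:
`(1/F(q)) ∑_{n ≥ 0} (-1)^n q^{4k·C(n,2)+(2k(j+1)+2i-1)n}
  (1-q^{2(n+1)})⋯(1-q^{2(n+j)}) / ((1+q^{2n+1})⋯(1+q^{2(n+j)+1}))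
  · (1 - q^{2(k-i+1)(2n+j+1)} + q^{2(n+j)+1}(1 - q^{2(k-i)(2n+j+1)}))`. -/
noncomputable def Gcf (k j i : ℕ) : PowerSeries ℚ :=
  Fq⁻¹ * sSum (fun n =>
    (-1 : PowerSeries ℚ) ^ n *
    PowerSeries.X ^ (4 * k * n.choose 2 + (2 * k * (j + 1) + 2 * i - 1) * n) *
    (∏ t ∈ Finset.Icc 1 j, (1 - PowerSeries.X ^ (2 * (n + t)))) *
    (∏ t ∈ Finset.range (j + 1), (1 + PowerSeries.X ^ (2 * (n + t) + 1)))⁻¹ *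
    (1 - PowerSeries.X ^ (2 * (k - i + 1) * (2 * n + j + 1)) +
      PowerSeries.X ^ (2 * (n + j) + 1) *
        (1 - PowerSeries.X ^ (2 * (k - i) * (2 * n + j + 1)))))

/-! The summands of `G̃_{j,k}` and `G̃_{j+1,1}` differ by a telescoping difference
`D n - D (n + 1)`, where `D n` is the `i = k` summand with its last factor replaced by
`1 - q^{2n}`. Since `D 0 = 0` and `D n = O(q^n)`, the two sums agree. After removing the common
factor `(-1)^n q^e (1-q^{2(n+1)})⋯(1-q^{2(n+j)}) / ((1+q^{2n+1})⋯(1+q^{2(n+j)+3}))`, the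
termwise identity reduces, with `N = 2n+j+2`, to
`(1 + q^{2n+2j+3}) - (1 - q^{2kN} + q^{2n+2j+3}(1 - q^{2(k-1)N})) = q^{2kN-2n-1}(1 + q^{2n+1})`. -/

theorem PowerSeries.constantCoeff_one_add_X_pow_ne_zero {R : Type*} [CommRing R] [Nontrivial R]
    {m : ℕ} (hm : m ≠ 0) : constantCoeff (1 + X ^ m : R⟦X⟧) ≠ 0 := by
  simp [zero_pow hm]

theorem PowerSeries.inv_eq_mul_mul_inv {k : Type*} [Field k] {φ ψ : k⟦X⟧}
    (hψ : constantCoeff ψ ≠ 0) : φ⁻¹ = ψ * (φ * ψ)⁻¹ := by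
  rw [PowerSeries.mul_inv_rev, ← mul_assoc, PowerSeries.mul_inv_cancel ψ hψ, one_mul]

theorem sSum_eq_sSum_of_telescoping {f g D : ℕ → ℚ⟦X⟧} (hD0 : D 0 = 0)
    (hD : ∀ n, X ^ n ∣ D n) (h : ∀ n, f n - g n = D n - D (n + 1)) : sSum f = sSum g := by
  ext d
  have hsum : ∑ n ∈ range (d + 1), f n = ∑ n ∈ range (d + 1), g n + (D 0 - D (d + 1)) := by
    rw [← sum_range_sub' D, ← sum_add_distrib]
    exact sum_congr rfl fun n _ => by linear_combination h n
  have hcoeff : coeff d (D (d + 1)) = 0 := X_pow_dvd_iff.mp (hD (d + 1)) d d.lt_succ_self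
  simp only [sSum, coeff_mk, hsum, hD0, map_add, map_sub, hcoeff, map_zero, sub_zero, add_zero]

namespace Gcf

noncomputable def evenProd (j n : ℕ) : ℚ⟦X⟧ := ∏ t ∈ Icc 1 j, (1 - X ^ (2 * (n + t)))

noncomputable def oddProd (j n : ℕ) : ℚ⟦X⟧ := ∏ t ∈ range (j + 1), (1 + X ^ (2 * (n + t) + 1))

noncomputable def term (k j i n : ℕ) : ℚ⟦X⟧ :=
  (-1) ^ n * X ^ (4 * k * n.choose 2 + (2 * k * (j + 1) + 2 * i - 1) * n) * evenProd j n *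
    (oddProd j n)⁻¹ *
    (1 - X ^ (2 * (k - i + 1) * (2 * n + j + 1)) +
      X ^ (2 * (n + j) + 1) * (1 - X ^ (2 * (k - i) * (2 * n + j + 1))))

theorem _root_.Gcf_eq_inv_mul_sSum (k j i : ℕ) : Gcf k j i = Fq⁻¹ * sSum (term k j i) := rfl

theorem evenProd_succ (j n : ℕ) :
    evenProd (j + 1) n = evenProd j n * (1 - X ^ (2 * (n + j + 1))) :=
  prod_Icc_succ_top (Nat.le_add_left 1 j) _

theorem evenProd_shift (j n : ℕ) :
    evenProd j (n + 1) * (1 - X ^ (2 * (n + 1))) = evenProd j n * (1 - X ^ (2 * (n + j + 1))) := by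
  induction j with
  | zero => simp [evenProd]
  | succ j ih =>
    rw [evenProd_succ, evenProd_succ, mul_right_comm, ih,
      show n + 1 + j + 1 = n + (j + 1) + 1 by ring]

theorem oddProd_succ (j n : ℕ) :
    oddProd j n * (1 + X ^ (2 * (n + j + 1) + 1)) = oddProd (j + 1) n :=
  (prod_range_succ _ _).symm

theorem oddProd_shift (j n : ℕ) :
    oddProd j (n + 1) * (1 + X ^ (2 * n + 1)) = oddProd (j + 1) n := by
  rw [oddProd, oddProd, prod_range_succ' _ (j + 1)]
  simp only [add_zero, add_assoc, add_comm 1]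

theorem inv_oddProd (j n : ℕ) :
    (oddProd j n)⁻¹ = (1 + X ^ (2 * (n + j + 1) + 1)) * (oddProd (j + 1) n)⁻¹ := by
  rw [PowerSeries.inv_eq_mul_mul_inv
    (constantCoeff_one_add_X_pow_ne_zero (m := 2 * (n + j + 1) + 1) (by omega)), oddProd_succ]

theorem inv_oddProd_succ (j n : ℕ) :
    (oddProd j (n + 1))⁻¹ = (1 + X ^ (2 * n + 1)) * (oddProd (j + 1) n)⁻¹ := by
  rw [PowerSeries.inv_eq_mul_mul_inv
    (constantCoeff_one_add_X_pow_ne_zero (m := 2 * n + 1) (by omega)), oddProd_shift]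

noncomputable def telescoper (k j n : ℕ) : ℚ⟦X⟧ :=
  (-1) ^ n * X ^ (4 * k * n.choose 2 + (2 * k * (j + 1) + 2 * k - 1) * n) * evenProd j n *
    (oddProd j n)⁻¹ * (1 - X ^ (2 * n))

theorem telescoper_zero (k j : ℕ) : telescoper k j 0 = 0 := by
  simp [telescoper]

theorem X_pow_dvd_telescoper {k : ℕ} (hk : 0 < k) (j n : ℕ) : X ^ n ∣ telescoper k j n := by
  have hle : n ≤ 4 * k * n.choose 2 + (2 * k * (j + 1) + 2 * k - 1) * n :=
    le_add_left (Nat.le_mul_of_pos_left n (by omega))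
  exact ((((pow_dvd_pow X hle).mul_left _).mul_right _).mul_right _).mul_right _

theorem term_sub_term_eq_telescoper_sub {k : ℕ} (hk : 0 < k) (j n : ℕ) :
    term k j k n - term k (j + 1) 1 n = telescoper k j n - telescoper k j (n + 1) := by
  obtain ⟨m, rfl⟩ : ∃ m, k = m + 1 := ⟨k - 1, by omega⟩
  have hexp : 2 * (m + 1) * (j + 1) + 2 * (m + 1) - 1 = 2 * (m + 1) * (j + 1) + 2 * m + 1 := by
    omega
  have hexp' : 2 * (m + 1) * (j + 1 + 1) + 2 * 1 - 1 = 2 * (m + 1) * (j + 1 + 1) + 1 := by omega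
  have hchoose : (n + 1).choose 2 = n.choose 2 + n := by
    rw [Nat.choose_succ_succ, Nat.choose_one_right, add_comm]
  simp only [term, telescoper, hexp, hexp', hchoose, Nat.sub_self, Nat.add_sub_cancel,
    evenProd_succ]
  rw [inv_oddProd j n, inv_oddProd_succ j n]
  linear_combination
    (-1) ^ (n + 1) * (1 + X ^ (2 * n + 1)) * (oddProd (j + 1) n)⁻¹ *
      X ^ (4 * (m + 1) * (n.choose 2 + n) + (2 * (m + 1) * (j + 1) + 2 * m + 1) * (n + 1)) *
      evenProd_shift j n

end Gcf

/-- Edge-matching: `G̃_{j,k}(q) = G̃_{j+1,1}(q)` for all `j ≥ 0`. -/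
theorem edge_matching (k : ℕ) (hk : 2 ≤ k) (j : ℕ) :
    Gcf k j k = Gcf k (j + 1) 1 := by
  rw [Gcf_eq_inv_mul_sSum, Gcf_eq_inv_mul_sSum,
    sSum_eq_sSum_of_telescoping (Gcf.telescoper_zero k j)
      (Gcf.X_pow_dvd_telescoper (by omega) j) (Gcf.term_sub_term_eq_telescoper_sub (by omega) j)]
end

section
/- With G_{(k-1)j+i}(q) defined by the closed-form alternating sum over F(q) as in the Göllnitz–Gordon–Andrews setting, for every j ≥ 0 and 1 ≤ i ≤ k there exists γ(q) ∈ ℤ[[q]] such that G_{(k-1)j+i}(q) = 1 + q^{2j+1} γ(q). -/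
open PowerSeries Finset

/-!
Modulo `q^(2j+1)` only the `n = 0` summand survives, since for `n ≥ 1` the exponent
`4k·C(n,2) + (2k(j+1)+2i-1)n` is at least `2k(j+1) - 1 > 2j`, and the last factor of that
summand is `≡ 1`. What remains is `∏_{t=1}^{j} (1-q^{2t}) / ∏_{t=0}^{j} (1+q^{2t+1})`, which is
`≡ F(q)`: pairing `(1-q^m)(1+q^m) = 1-q^{2m}` for odd `m` turns the odd factors of `F(q)` into the
factors `1-q^m` with `m ≡ 2 (mod 4)`, and together with the factors `m ≡ 0 (mod 4)` these give all
even `m`, up to factors `1 - q^m` with `m > 2j`. Hence `G ≡ F(q)⁻¹ F(q) = 1`. Integrality holds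
because every series involved is built from integer series by ring operations and by inverting
series with constant term `1`.
-/

section PowerSeriesCongruence

variable {R : Type*} [CommRing R]

theorem smodEq_X_pow_iff {N : ℕ} {f g : R⟦X⟧} :
    f ≡ g [SMOD Ideal.span {X ^ N}] ↔ ∀ d < N, coeff d f = coeff d g := by
  simp only [SModEq.sub_mem, Ideal.mem_span_singleton, X_pow_dvd_iff, map_sub, sub_eq_zero]

theorem X_pow_smodEq_zero {N m : ℕ} (h : N ≤ m) :
    (X : R⟦X⟧) ^ m ≡ 0 [SMOD Ideal.span {X ^ N}] :=
  SModEq.zero.mpr (Ideal.mem_span_singleton.mpr (pow_dvd_pow X h))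

theorem prod_smodEq_prod_filter {ι : Type*} {I : Ideal R} (s : Finset ι) (P : ι → Prop)
    [DecidablePred P] {F : ι → R} (h : ∀ x ∈ s, ¬ P x → F x ≡ 1 [SMOD I]) :
    ∏ x ∈ s, F x ≡ ∏ x ∈ s.filter P, F x [SMOD I] := by
  rw [prod_filter]
  refine SModEq.prod fun x hx => ?_
  split_ifs with hP
  exacts [SModEq.rfl, h x hx hP]

theorem prod_one_sub_X_pow_smodEq {ι : Type*} (N : ℕ) (s : Finset ι) (e : ι → ℕ) :
    ∏ t ∈ s, (1 - (X : R⟦X⟧) ^ e t) ≡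
      ∏ t ∈ s.filter (fun t => e t < N), (1 - X ^ e t) [SMOD Ideal.span {X ^ N}] :=
  prod_smodEq_prod_filter s _ fun _ _ ht =>
    by simpa using (SModEq.rfl (x := (1 : R⟦X⟧))).sub (X_pow_smodEq_zero (not_lt.mp ht))

theorem one_add_X_pow_smodEq_one {N m : ℕ} (h : N ≤ m) :
    1 + (X : R⟦X⟧) ^ m ≡ 1 [SMOD Ideal.span {X ^ N}] := by
  simpa using (SModEq.refl (1 : R⟦X⟧)).add (X_pow_smodEq_zero h)

theorem prod_Icc_one_sub_X_pow_two_mul (j : ℕ) :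
    ∏ t ∈ Icc 1 j, (1 - (X : R⟦X⟧) ^ (2 * t)) =
      (∏ m ∈ (range (2 * j + 1)).filter (fun m => m % 4 = 2), (1 - X ^ m)) *
        ∏ m ∈ (range (2 * j + 1)).filter (fun m => 1 ≤ m ∧ m % 4 = 0), (1 - X ^ m) := by
  have heven : ∏ t ∈ Icc 1 j, (1 - (X : R⟦X⟧) ^ (2 * t)) =
      ∏ m ∈ (range (2 * j + 1)).filter (fun m => 1 ≤ m ∧ m % 2 = 0), (1 - X ^ m) :=
    prod_nbij' (2 * ·) (· / 2) (by simp; omega) (by simp; omega) (by simp)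
      (by simp; omega) (by simp)
  rw [heven, ← prod_filter_mul_prod_filter_not _ (fun m => m % 4 = 2), filter_filter,
    filter_filter]
  congr 1 <;> exact prod_congr (filter_congr fun m _ => by omega) fun _ _ => rfl

theorem prod_odd_one_sub_X_pow_mul_prod_one_add_smodEq (j : ℕ) :
    (∏ t ∈ range j, (1 - (X : R⟦X⟧) ^ (2 * t + 1))) * ∏ t ∈ range j, (1 + X ^ (2 * t + 1)) ≡
      ∏ m ∈ (range (2 * j + 1)).filter (fun m => m % 4 = 2), (1 - X ^ m)
      [SMOD Ideal.span {X ^ (2 * j + 1)}] :=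
  calc _ = ∏ t ∈ range j, (1 - (X : R⟦X⟧) ^ (4 * t + 2)) := by
        rw [← prod_mul_distrib]; exact prod_congr rfl fun t _ => by ring
    _ ≡ ∏ t ∈ (range j).filter (fun t => 4 * t + 2 < 2 * j + 1), (1 - X ^ (4 * t + 2))
        [SMOD Ideal.span {X ^ (2 * j + 1)}] := prod_one_sub_X_pow_smodEq _ _ _
    _ = _ := prod_nbij' (4 * · + 2) (· / 4) (by simp) (by simp; omega) (by simp; omega)
        (by simp; omega) (by simp)

theorem exists_map_eq_one_add_X_pow_mul {S : Type*} [CommRing S] {φ : R →+* S}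
    (hφ : Function.Injective φ) {N : ℕ} {g : R⟦X⟧}
    (h : map φ g ≡ 1 [SMOD Ideal.span {X ^ N}]) :
    ∃ γ : R⟦X⟧, map φ g = 1 + X ^ N * map φ γ := by
  have hg : X ^ N ∣ g - 1 := by
    refine X_pow_dvd_iff.mpr fun d hd => hφ ?_
    have := smodEq_X_pow_iff.mp h d hd
    rw [coeff_map, ← map_one (map φ), coeff_map] at this
    rw [map_sub, map_sub, this, sub_self, map_zero]
  obtain ⟨γ, hγ⟩ := hg
  exact ⟨γ, by rw [← sub_eq_iff_eq_add', ← map_one (map φ), ← map_sub, hγ, map_mul, map_pow, map_X]⟩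

theorem mk_coeff_mem_range_map {S : Type*} [CommRing S] {φ : R →+* S} {u : ℕ → S⟦X⟧}
    (hu : ∀ d, u d ∈ (map φ).range) : mk (fun d => coeff d (u d)) ∈ (map φ).range := by
  choose g hg using hu
  exact ⟨mk fun d => coeff d (g d), by ext d; simp [coeff_map, ← hg d]⟩

theorem inv_mem_range_map {k : Type*} [Field k] {φ : R →+* k} (hφ : Function.Injective φ)
    {f : k⟦X⟧} (hf : f ∈ (map φ).range) (h1 : constantCoeff f = 1) :
    f⁻¹ ∈ (map φ).range := by
  obtain ⟨g, rfl⟩ := hf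
  have hg : constantCoeff g = ((1 : Rˣ) : R) := hφ <| by
    rw [← coeff_zero_eq_constantCoeff_apply, ← coeff_map, coeff_zero_eq_constantCoeff_apply, h1]
    simp
  refine ⟨invOfUnit g 1, (eq_inv_iff_mul_eq_one (by simp [h1])).mpr ?_⟩
  rw [← map_mul, invOfUnit_mul g 1 hg, map_one]

end PowerSeriesCongruence

theorem sProd_smodEq (P : ℕ → Prop) [DecidablePred P] (N : ℕ) :
    sProd P ≡ ∏ m ∈ (range N).filter P, (1 - X ^ m) [SMOD Ideal.span {X ^ N}] := by
  refine smodEq_X_pow_iff.mpr fun d hd => ?_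
  have hsub : ((range N).filter P).filter (· < d + 1) = (range (d + 1)).filter P := by
    ext m; simp only [mem_filter, mem_range]
    exact ⟨fun ⟨⟨_, hP⟩, hm⟩ => ⟨hm, hP⟩, fun ⟨hm, hP⟩ => ⟨⟨by omega, hP⟩, hm⟩⟩
  rw [sProd, coeff_mk, ← hsub]
  exact (smodEq_X_pow_iff.mp (prod_one_sub_X_pow_smodEq (d + 1) _ id) d d.lt_succ_self).symm

theorem sSum_smodEq {N : ℕ} (f : ℕ → ℚ⟦X⟧)
    (h : ∀ n, f (n + 1) ≡ 0 [SMOD Ideal.span {X ^ N}]) :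
    sSum f ≡ f 0 [SMOD Ideal.span {X ^ N}] := by
  refine smodEq_X_pow_iff.mpr fun d hd => ?_
  have htail : ∑ n ∈ range d, f (n + 1) ≡ 0 [SMOD Ideal.span {X ^ N}] := by
    simpa using SModEq.sum fun n _ => h n
  rw [sSum, coeff_mk, sum_range_succ', map_add, smodEq_X_pow_iff.mp htail d hd, map_zero,
    zero_add]

theorem X_mem_range_map_intCast : (X : ℚ⟦X⟧) ∈ (map (Int.castRingHom ℚ)).range :=
  ⟨X, map_X _⟩

theorem sProd_mem_range_map_intCast (P : ℕ → Prop) [DecidablePred P] :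
    sProd P ∈ (map (Int.castRingHom ℚ)).range :=
  mk_coeff_mem_range_map fun _ =>
    prod_mem fun _ _ => sub_mem (one_mem _) (pow_mem X_mem_range_map_intCast _)

theorem sSum_mem_range_map_intCast {f : ℕ → ℚ⟦X⟧}
    (hf : ∀ n, f n ∈ (map (Int.castRingHom ℚ)).range) :
    sSum f ∈ (map (Int.castRingHom ℚ)).range :=
  mk_coeff_mem_range_map fun _ => sum_mem fun n _ => hf n

theorem Fq_smodEq (j : ℕ) :
    Fq ≡ (∏ t ∈ range j, (1 - X ^ (2 * t + 1))) *
      ∏ m ∈ (range (2 * j + 1)).filter (fun m => 1 ≤ m ∧ m % 4 = 0), (1 - X ^ m)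
      [SMOD Ideal.span {X ^ (2 * j + 1)}] := by
  have hodd : ∏ m ∈ (range (2 * j + 1)).filter (fun m => (1 ≤ m ∧ m % 4 ≠ 2) ∧ m % 2 = 1),
      (1 - (X : ℚ⟦X⟧) ^ m) = ∏ t ∈ range j, (1 - X ^ (2 * t + 1)) :=
    prod_nbij' (· / 2) (2 * · + 1) (by simp; omega) (by simp; omega) (by simp; omega)
      (by simp; omega) fun m hm => by simp at hm; congr 2; omega
  have heven : ∏ m ∈ (range (2 * j + 1)).filter (fun m => (1 ≤ m ∧ m % 4 ≠ 2) ∧ ¬ m % 2 = 1),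
      (1 - (X : ℚ⟦X⟧) ^ m) =
        ∏ m ∈ (range (2 * j + 1)).filter (fun m => 1 ≤ m ∧ m % 4 = 0), (1 - X ^ m) :=
    prod_congr (filter_congr fun m _ => by omega) fun _ _ => rfl
  have hsplit := sProd_smodEq (fun m => 1 ≤ m ∧ m % 4 ≠ 2) (2 * j + 1)
  rwa [← prod_filter_mul_prod_filter_not _ (fun m => m % 2 = 1), filter_filter, filter_filter,
    hodd, heven] at hsplit

theorem Fq_mul_prod_one_add_smodEq (j : ℕ) :
    Fq * ∏ t ∈ range (j + 1), (1 + (X : ℚ⟦X⟧) ^ (2 * t + 1)) ≡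
      ∏ t ∈ Icc 1 j, (1 - (X : ℚ⟦X⟧) ^ (2 * t)) [SMOD Ideal.span {X ^ (2 * j + 1)}] := by
  rw [prod_range_succ, prod_Icc_one_sub_X_pow_two_mul]
  refine ((Fq_smodEq j).mul (SModEq.rfl.mul (one_add_X_pow_smodEq_one le_rfl))).trans ?_
  rw [mul_one, mul_right_comm]
  exact (prod_odd_one_sub_X_pow_mul_prod_one_add_smodEq (R := ℚ) j).mul SModEq.rfl

noncomputable def gcfTerm (k j i n : ℕ) : ℚ⟦X⟧ :=
  (-1 : ℚ⟦X⟧) ^ n * X ^ (4 * k * n.choose 2 + (2 * k * (j + 1) + 2 * i - 1) * n) *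
    (∏ t ∈ Icc 1 j, (1 - X ^ (2 * (n + t)))) *
    (∏ t ∈ range (j + 1), (1 + X ^ (2 * (n + t) + 1)))⁻¹ *
    (1 - X ^ (2 * (k - i + 1) * (2 * n + j + 1)) +
      X ^ (2 * (n + j) + 1) * (1 - X ^ (2 * (k - i) * (2 * n + j + 1))))

theorem Gcf_eq (k j i : ℕ) : Gcf k j i = Fq⁻¹ * sSum (gcfTerm k j i) := rfl

theorem constantCoeff_Fq : constantCoeff Fq = 1 := by
  have h := smodEq_X_pow_iff.mp (sProd_smodEq (fun m => 1 ≤ m ∧ m % 4 ≠ 2) 1) 0 one_pos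
  have hempty : (range 1).filter (fun m => 1 ≤ m ∧ m % 4 ≠ 2) = ∅ := by decide
  rwa [hempty, prod_empty, coeff_one, if_pos rfl, coeff_zero_eq_constantCoeff_apply] at h

theorem gcfTerm_succ_smodEq_zero {k : ℕ} (hk : 1 ≤ k) (j i n : ℕ) :
    gcfTerm k j i (n + 1) ≡ 0 [SMOD Ideal.span {X ^ (2 * j + 1)}] := by
  set e := 4 * k * (n + 1).choose 2 + (2 * k * (j + 1) + 2 * i - 1) * (n + 1)
  have he : 2 * j + 1 ≤ e := by
    have : 2 * (j + 1) ≤ 2 * k * (j + 1) := by nlinarith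
    calc 2 * j + 1 ≤ 2 * k * (j + 1) + 2 * i - 1 := by omega
      _ ≤ (2 * k * (j + 1) + 2 * i - 1) * (n + 1) := Nat.le_mul_of_pos_right _ n.succ_pos
      _ ≤ e := Nat.le_add_left _ _
  refine SModEq.zero.mpr (Ideal.mem_span_singleton.mpr ((pow_dvd_pow X he).trans ?_))
  exact (((dvd_mul_left _ _).mul_right _).mul_right _).mul_right _

theorem gcfTerm_zero_smodEq (k j i : ℕ) :
    gcfTerm k j i 0 ≡ (∏ t ∈ Icc 1 j, (1 - X ^ (2 * t))) *
      (∏ t ∈ range (j + 1), (1 + (X : ℚ⟦X⟧) ^ (2 * t + 1)))⁻¹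
      [SMOD Ideal.span {X ^ (2 * j + 1)}] := by
  have hC : 1 - (X : ℚ⟦X⟧) ^ (2 * (k - i + 1) * (j + 1)) +
      X ^ (2 * j + 1) * (1 - X ^ (2 * (k - i) * (j + 1))) ≡ 1
      [SMOD Ideal.span {X ^ (2 * j + 1)}] := by
    have hle : 2 * j + 1 ≤ 2 * (k - i + 1) * (j + 1) := by nlinarith
    simpa using (SModEq.rfl.sub (X_pow_smodEq_zero hle)).add
      ((X_pow_smodEq_zero (R := ℚ) le_rfl).mul (SModEq.refl (1 - X ^ (2 * (k - i) * (j + 1)))))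
  simpa [gcfTerm] using SModEq.rfl.mul hC

theorem Gcf_smodEq_one {k : ℕ} (hk : 1 ≤ k) (j i : ℕ) :
    Gcf k j i ≡ 1 [SMOD Ideal.span {X ^ (2 * j + 1)}] := by
  have hB : (∏ t ∈ range (j + 1), (1 + (X : ℚ⟦X⟧) ^ (2 * t + 1))) *
      (∏ t ∈ range (j + 1), (1 + X ^ (2 * t + 1)))⁻¹ = 1 :=
    PowerSeries.mul_inv_cancel _ (by simp [map_prod])
  have hFq : Fq⁻¹ * Fq = 1 :=
    PowerSeries.inv_mul_cancel _ (by simp [constantCoeff_Fq])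
  have hsum : sSum (gcfTerm k j i) ≡ Fq [SMOD Ideal.span {X ^ (2 * j + 1)}] := by
    refine ((sSum_smodEq _ (gcfTerm_succ_smodEq_zero hk j i)).trans
      (gcfTerm_zero_smodEq k j i)).trans ?_
    have h := (Fq_mul_prod_one_add_smodEq j).mul
      (SModEq.refl (∏ t ∈ range (j + 1), (1 + (X : ℚ⟦X⟧) ^ (2 * t + 1)))⁻¹)
    rw [mul_assoc, hB, mul_one] at h
    exact h.symm
  simpa [Gcf_eq, hFq] using (SModEq.refl Fq⁻¹).mul hsum

theorem gcfTerm_mem_range_map_intCast (k j i n : ℕ) :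
    gcfTerm k j i n ∈ (map (Int.castRingHom ℚ)).range := by
  have hX := X_mem_range_map_intCast
  have hB : (∏ t ∈ range (j + 1), (1 + (X : ℚ⟦X⟧) ^ (2 * (n + t) + 1)))⁻¹ ∈
      (map (Int.castRingHom ℚ)).range :=
    inv_mem_range_map Int.cast_injective
      (prod_mem fun _ _ => add_mem (one_mem _) (pow_mem hX _)) (by simp [map_prod])
  refine mul_mem (mul_mem (mul_mem (mul_mem ?_ ?_) ?_) hB) ?_
  · exact pow_mem (neg_mem (one_mem _)) n
  · exact pow_mem hX _
  · exact prod_mem fun _ _ => sub_mem (one_mem _) (pow_mem hX _)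
  · exact add_mem (sub_mem (one_mem _) (pow_mem hX _))
      (mul_mem (pow_mem hX _) (sub_mem (one_mem _) (pow_mem hX _)))

theorem Gcf_mem_range_map_intCast (k j i : ℕ) :
    Gcf k j i ∈ (map (Int.castRingHom ℚ)).range :=
  mul_mem (inv_mem_range_map Int.cast_injective (sProd_mem_range_map_intCast _) constantCoeff_Fq)
    (sSum_mem_range_map_intCast (gcfTerm_mem_range_map_intCast k j i))

theorem empirical_hypothesis_general (k : ℕ) (hk : 2 ≤ k) (j i : ℕ) :
    ∃ γ : PowerSeries ℤ,
      Gcf k j i = 1 + PowerSeries.X ^ (2 * j + 1) *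
        PowerSeries.map (Int.castRingHom ℚ) γ := by
  obtain ⟨g, hg⟩ := Gcf_mem_range_map_intCast k j i
  rw [← hg]
  exact exists_map_eq_one_add_X_pow_mul Int.cast_injective (hg ▸ Gcf_smodEq_one (by omega) j i)

/-- The Empirical Hypothesis: each `G_{(k-1)j+i}(q)` (given by its closed form)
equals `1 + q^{2j+1} γ(q)` for some `γ(q) ∈ ℤ⟦q⟧`. -/
theorem empirical_hypothesis (k : ℕ) (hk : 2 ≤ k) (j i : ℕ) (hi1 : 1 ≤ i) (hik : i ≤ k) :
    ∃ γ : PowerSeries ℤ,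
      Gcf k j i = 1 + PowerSeries.X ^ (2 * j + 1) *
        PowerSeries.map (Int.castRingHom ℚ) γ :=
  empirical_hypothesis_general k hk j i
end

section
/- With the notation of the Göllnitz–Gordon–Andrews Empirical Hypothesis, the stronger statement holds: for 1 ≤ i ≤ k−1 and j ≥ 0, the coefficient of q^{2j+1} in G_{(k-1)j+i}(q) equals 1 (so G_{(k-1)j+i}(q) = 1 + q^{2j+1} + higher order terms), and G_{(k-1)j+k}(q) = 1 + q^{2j+3} + higher order terms. -/
open PowerSeries Finset

/-!
Modulo `q^{2j+4}` only the `n = 0` summand of `G` survives, since the `n`-th one is divisible by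
`q^{2k(j+1)+2i-1}`. After clearing the unit `F(q) ∏_{t ≤ j} (1 + q^{2t+1})` the claims become
congruences between finite products, which are truncations of `(q²;q²)_∞ = (-q;q²)_∞ F(q)`.
That identity holds because `F(q) = (q;q²)_∞ (q⁴;q⁴)_∞`, `(-q;q²)_∞ (q;q²)_∞ = (q²;q⁴)_∞` and
`(q²;q²)_∞ = (q²;q⁴)_∞ (q⁴;q⁴)_∞`.
-/

namespace PowerSeries

variable {R : Type*} [CommRing R]

noncomputable abbrev modX (N : ℕ) : R⟦X⟧ →+* R⟦X⟧ ⧸ Ideal.span {(X : R⟦X⟧) ^ N} :=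
  Ideal.Quotient.mk _

theorem modX_eq_modX_iff {N : ℕ} {a b : R⟦X⟧} :
    modX N a = modX N b ↔ ∀ d < N, coeff d a = coeff d b := by
  simp only [modX, Ideal.Quotient.eq, Ideal.mem_span_singleton, X_pow_dvd_iff, map_sub,
    sub_eq_zero]

theorem exists_eq_add_X_pow_mul_of_modX_eq {N : ℕ} {a b : R⟦X⟧} (h : modX N a = modX N b) :
    ∃ γ : R⟦X⟧, a = b + X ^ N * γ := by
  obtain ⟨γ, hγ⟩ := Ideal.mem_span_singleton.1 (Ideal.Quotient.eq.1 h)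
  exact ⟨γ, eq_add_of_sub_eq' hγ⟩

theorem modX_X_pow_of_le {N m : ℕ} (h : N ≤ m) : modX N (X ^ m : R⟦X⟧) = 0 :=
  Ideal.Quotient.eq_zero_iff_mem.2 (Ideal.mem_span_singleton.2 (pow_dvd_pow X h))

theorem modX_prod_range_of_le {N n L : ℕ} (g : ℕ → R⟦X⟧)
    (hg : ∀ m, n ≤ m → modX N (g m) = 1) (hL : n ≤ L) :
    modX N (∏ m ∈ range L, g m) = modX N (∏ m ∈ range n, g m) := by
  rw [← prod_range_mul_prod_Ico g hL, map_mul, map_prod (modX N) _ (Ico n L),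
    prod_eq_one fun m hm => hg m (mem_Ico.1 hm).1, mul_one]

theorem modX_prod_filter_range_of_le {N L : ℕ} (P : ℕ → Prop) [DecidablePred P]
    (hL : N ≤ L) :
    modX N (∏ m ∈ range L with P m, (1 - X ^ m : R⟦X⟧)) =
      modX N (∏ m ∈ range N with P m, (1 - X ^ m : R⟦X⟧)) := by
  simp only [prod_filter]
  refine modX_prod_range_of_le _ (fun m hm => ?_) hL
  split_ifs <;> simp [modX_X_pow_of_le hm]

theorem isUnit_prod_one_add_X_pow (s : Finset ℕ) (e : ℕ → ℕ) :
    IsUnit (∏ t ∈ s, (1 + X ^ (e t + 1) : R⟦X⟧)) := by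
  rw [isUnit_iff_constantCoeff, map_prod]
  simp

end PowerSeries

theorem Finset.prod_range_mul_eq_prod_prod_range {M : Type*} [CommMonoid M] (f : ℕ → M)
    (n b : ℕ) :
    ∏ i ∈ range (n * b), f i = ∏ s ∈ range n, ∏ r ∈ range b, f (b * s + r) := by
  induction n with
  | zero => simp
  | succ n ih => rw [Nat.succ_mul, prod_range_add, ih, prod_range_succ, mul_comm n b]

theorem Finset.prod_Icc_one_eq_prod_range {M : Type*} [CommMonoid M] (f : ℕ → M) (n : ℕ) :
    ∏ t ∈ Icc 1 n, f t = ∏ t ∈ range n, f (t + 1) := by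
  induction n with
  | zero => simp
  | succ n ih => rw [prod_Icc_succ_top (by omega), ih, prod_range_succ]

theorem modX_sProd (P : ℕ → Prop) [DecidablePred P] (N : ℕ) :
    modX N (sProd P) = modX N (∏ m ∈ range N with P m, (1 - X ^ m)) := by
  refine modX_eq_modX_iff.2 fun d hd => ?_
  rw [sProd, coeff_mk]
  exact (modX_eq_modX_iff.1 (modX_prod_filter_range_of_le P hd) d d.lt_succ_self).symm

theorem modX_sSum {N : ℕ} (f : ℕ → ℚ⟦X⟧) (hf : ∀ n, 1 ≤ n → modX N (f n) = 0) :
    modX N (sSum f) = modX N (f 0) := by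
  refine modX_eq_modX_iff.2 fun d hd => ?_
  rw [sSum, coeff_mk, map_sum, sum_range_succ', sum_eq_zero, zero_add]
  intro n _
  simpa using modX_eq_modX_iff.1 (hf (n + 1) n.succ_pos) d hd

theorem modX_Fq (M : ℕ) :
    modX (2 * M) Fq = modX (2 * M)
      ((∏ t ∈ range M, (1 - X ^ (2 * t + 1))) * ∏ t ∈ range M, (1 - X ^ (4 * t + 4))) := by
  have hblocks :
      ∏ m ∈ range (4 * M + 1) with (1 ≤ m ∧ m % 4 ≠ 2), (1 - X ^ m : ℚ⟦X⟧) =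
      (∏ t ∈ range (M * 2), (1 - X ^ (2 * t + 1))) *
        ∏ t ∈ range M, (1 - X ^ (4 * t + 4)) := by
    rw [prod_filter, prod_range_succ', if_neg (by omega), mul_one, mul_comm 4 M,
      prod_range_mul_eq_prod_prod_range, prod_range_mul_eq_prod_prod_range,
      ← prod_mul_distrib]
    refine prod_congr rfl fun s _ => ?_
    simp only [prod_range_succ, prod_range_zero, one_mul]
    rw [if_pos (by omega), if_neg (by omega), if_pos (by omega), if_pos (by omega)]
    ring
  calc modX (2 * M) Fq = modX (2 * M) (∏ m ∈ range (4 * M + 1) with (1 ≤ m ∧ m % 4 ≠ 2),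
        (1 - X ^ m)) := by
        rw [Fq, modX_sProd]
        exact (modX_prod_filter_range_of_le _ (by omega)).symm
    _ = _ := by
        rw [hblocks, map_mul, map_mul,
          modX_prod_range_of_le (n := M) _ (fun m hm => ?_) (by omega)]
        simp [modX_X_pow_of_le (by omega : 2 * M ≤ 2 * m + 1)]

theorem modX_prod_even_eq_prod_odd_mul_Fq (M : ℕ) :
    modX (2 * M) (∏ t ∈ range M, (1 - X ^ (2 * t + 2))) =
      modX (2 * M) ((∏ t ∈ range M, (1 + X ^ (2 * t + 1))) * Fq) := by
  calc modX (2 * M) (∏ t ∈ range M, (1 - X ^ (2 * t + 2)))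
      = modX (2 * M) (∏ t ∈ range (M * 2), (1 - X ^ (2 * t + 2))) :=
        (modX_prod_range_of_le _
          (fun m hm => by simp [modX_X_pow_of_le (by omega : 2 * M ≤ 2 * m + 2)]) (by omega)).symm
    _ = modX (2 * M) ((∏ t ∈ range M, (1 + (X : ℚ⟦X⟧) ^ (2 * t + 1))) *
          ((∏ t ∈ range M, (1 - X ^ (2 * t + 1))) *
            ∏ t ∈ range M, (1 - X ^ (4 * t + 4)))) := by
        rw [prod_range_mul_eq_prod_prod_range, ← prod_mul_distrib, ← prod_mul_distrib]
        refine congrArg _ (prod_congr rfl fun t _ => ?_)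
        simp only [prod_range_succ, prod_range_zero, one_mul]
        ring
    _ = modX (2 * M) ((∏ t ∈ range M, (1 + X ^ (2 * t + 1))) * Fq) := by
        rw [map_mul, map_mul _ _ Fq, modX_Fq]

section Gcf

variable {k j i : ℕ}

theorem modX_Gcf_eq_of_modX_eq (hk : 2 ≤ k) (hi : 1 ≤ i) {N : ℕ} (hN : N ≤ 2 * j + 4)
    (T : ℚ⟦X⟧)
    (h : modX N ((∏ t ∈ Icc 1 j, (1 - X ^ (2 * t))) *
        (1 - X ^ (2 * (k - i + 1) * (j + 1)) +
          X ^ (2 * j + 1) * (1 - X ^ (2 * (k - i) * (j + 1))))) =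
      modX N ((∏ t ∈ range (j + 1), (1 + X ^ (2 * t + 1))) * Fq * T)) :
    modX N (Gcf k j i) = modX N T := by
  set B : ℚ⟦X⟧ := ∏ t ∈ range (j + 1), (1 + X ^ (2 * t + 1))
  have hB : IsUnit B := isUnit_prod_one_add_X_pow _ (2 * ·)
  have hF : IsUnit Fq := isUnit_iff_constantCoeff.2 (constantCoeff_Fq ▸ isUnit_one)
  refine ((hB.mul hF).map (modX N)).mul_left_cancel ?_
  rw [← map_mul, ← map_mul, ← h, Gcf, mul_assoc B, ← mul_assoc Fq,
    PowerSeries.mul_inv_cancel _ (isUnit_iff_constantCoeff.1 hF).ne_zero, one_mul, map_mul,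
    modX_sSum, ← map_mul]
  · congr 1
    simp only [pow_zero, Nat.choose_zero_succ, mul_zero, zero_add, add_zero, one_mul]
    rw [← mul_assoc, ← mul_assoc, mul_comm B, mul_assoc _ B, PowerSeries.mul_inv_cancel B
      (isUnit_iff_constantCoeff.1 hB).ne_zero, mul_one]
  · intro n hn
    have hexp : N ≤ 4 * k * n.choose 2 + (2 * k * (j + 1) + 2 * i - 1) * n := by
      have h1 := Nat.le_mul_of_pos_right (2 * k * (j + 1) + 2 * i - 1) hn
      have h2 : 2 * 2 * (j + 1) ≤ 2 * k * (j + 1) := by gcongr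
      omega
    simp only [map_mul, modX_X_pow_of_le hexp, mul_zero, zero_mul]

theorem modX_Gcf_of_lt (hk : 2 ≤ k) (hi : 1 ≤ i) (hik : i < k) :
    modX (2 * j + 2) (Gcf k j i) = modX (2 * j + 2) (1 + X ^ (2 * j + 1)) := by
  refine modX_Gcf_eq_of_modX_eq hk hi (by omega) _ ?_
  have hA : modX (2 * j + 2) (∏ t ∈ Icc 1 j, (1 - X ^ (2 * t))) =
      modX (2 * j + 2) ((∏ t ∈ range (j + 1), (1 + X ^ (2 * t + 1))) * Fq) := by
    rw [show 2 * j + 2 = 2 * (j + 1) by ring, ← modX_prod_even_eq_prod_odd_mul_Fq,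
      prod_Icc_one_eq_prod_range, prod_range_succ, map_mul, map_sub, map_one,
      modX_X_pow_of_le (by omega), sub_zero, mul_one]
    simp only [mul_add, mul_one]
  have hpos : 0 < 2 * (k - i) * (j + 1) := Nat.mul_pos (by omega) j.succ_pos
  have hC : (1 - X ^ (2 * (k - i + 1) * (j + 1)) +
      X ^ (2 * j + 1) * (1 - X ^ (2 * (k - i) * (j + 1))) : ℚ⟦X⟧) =
      1 + X ^ (2 * j + 1) - X ^ (2 * (k - i) * (j + 1) + 2 * j + 2) -
        X ^ (2 * (k - i) * (j + 1) + 2 * j + 1) := by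
    ring
  rw [hC, map_mul, map_mul, hA, map_sub, map_sub, modX_X_pow_of_le (by omega),
    modX_X_pow_of_le (by omega), sub_zero, sub_zero]

theorem modX_Gcf_self (hk : 2 ≤ k) :
    modX (2 * j + 4) (Gcf k j k) = modX (2 * j + 4) (1 + X ^ (2 * j + 3)) := by
  refine modX_Gcf_eq_of_modX_eq hk (by omega) le_rfl _ ?_
  have hC : (1 - X ^ (2 * (k - k + 1) * (j + 1)) +
      X ^ (2 * j + 1) * (1 - X ^ (2 * (k - k) * (j + 1))) : ℚ⟦X⟧) = 1 - X ^ (2 * j + 2) := by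
    rw [Nat.sub_self]
    ring
  rw [hC, show 2 * j + 4 = 2 * (j + 2) by ring]
  calc _ = modX (2 * (j + 2)) (∏ t ∈ range (j + 1), (1 - (X : ℚ⟦X⟧) ^ (2 * t + 2))) := by
        simp only [prod_Icc_one_eq_prod_range, prod_range_succ _ j, mul_add, mul_one]
    _ = modX (2 * (j + 2)) (∏ t ∈ range (j + 2), (1 - (X : ℚ⟦X⟧) ^ (2 * t + 2))) :=
        (modX_prod_range_of_le _ (fun m hm => by
          simp [modX_X_pow_of_le (by omega : 2 * (j + 2) ≤ 2 * m + 2)]) (by omega)).symm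
    _ = _ := by
        rw [modX_prod_even_eq_prod_odd_mul_Fq, prod_range_succ _ (j + 1)]
        ring_nf

end Gcf

/-- The Strong Empirical Hypothesis: for `1 ≤ i ≤ k-1`, the coefficient of
`q^{2j+1}` in `G_{(k-1)j+i}(q)` is `1`, indeed
`G_{(k-1)j+i}(q) = 1 + q^{2j+1} + (higher order terms)`, while
`G_{(k-1)j+k}(q) = 1 + q^{2j+3} + (higher order terms)`. -/
theorem strong_empirical_hypothesis (k : ℕ) (hk : 2 ≤ k) (j : ℕ) :
    (∀ i, 1 ≤ i → i ≤ k - 1 →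
      PowerSeries.coeff (2 * j + 1) (Gcf k j i) = 1 ∧
      ∃ γ : PowerSeries ℚ,
        Gcf k j i = 1 + PowerSeries.X ^ (2 * j + 1) + PowerSeries.X ^ (2 * j + 2) * γ) ∧
    ∃ γ : PowerSeries ℚ,
      Gcf k j k = 1 + PowerSeries.X ^ (2 * j + 3) + PowerSeries.X ^ (2 * j + 4) * γ := by
  refine ⟨fun i hi hik => ?_, exists_eq_add_X_pow_mul_of_modX_eq (modX_Gcf_self hk)⟩
  have h := modX_Gcf_of_lt (j := j) hk hi (by omega)
  refine ⟨?_, exists_eq_add_X_pow_mul_of_modX_eq h⟩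
  rw [modX_eq_modX_iff.1 h _ (by omega)]
  simp [coeff_one, coeff_X_pow]
end

section
/- Fix k ≥ 2 and J ≥ 0, and define h^{(j)}_{i,l}(q) by h^{(J)}_{i,l} = δ_{i,l} and h^{(j)}_{i,l}(q) = q^{2j(l-1)} ∑_{m=1}^{k-l+1} h^{(j-1)}_{i,m}(q) + q^{2jl-1} ∑_{m=1}^{k-l} h^{(j-1)}_{i,m}(q) for j > J. Then for each j ≥ J+1 and each i, l, the polynomial h^{(j)}_{i,l}(q) is the generating function for partitions (b_1,…,b_s) such that no odd part repeats, b_p − b_{p+k-1} ≥ 2 if b_p is odd, b_p − b_{p+k-1} > 2 if b_p is even, the smallest part exceeds 2J, at most k−i parts equal 2J+1 or 2J+2, the largest part is at most 2j, and exactly l−1 parts equal 2j. -/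
open Polynomial

/-- The hypothesis that `h` satisfies the defining initial conditions and
recursions of the coefficient polynomials `h^{(j)}_{i,l}(q)` in the matrix
approach to the Göllnitz–Gordon–Andrews identities: `h^{(J)}_{i,l} = δ_{i,l}` and
`h^{(j)}_{i,l}(q) = q^{2j(l-1)} ∑_{m=1}^{k-l+1} h^{(j-1)}_{i,m}(q)
  + q^{2jl-1} ∑_{m=1}^{k-l} h^{(j-1)}_{i,m}(q)` for `j > J`. -/
def IsHSystem (k J : ℕ) (h : ℕ → ℕ → ℕ → Polynomial ℤ) : Prop :=
  (∀ i l, 1 ≤ i → i ≤ k → 1 ≤ l → l ≤ k →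
    h J i l = if i = l then 1 else 0) ∧
  (∀ j i l, J < j → 1 ≤ i → i ≤ k → 1 ≤ l → l ≤ k →
    h j i l = X ^ (2 * j * (l - 1)) * ∑ m ∈ Finset.Icc 1 (k - l + 1), h (j - 1) i m
      + X ^ (2 * j * l - 1) * ∑ m ∈ Finset.Icc 1 (k - l), h (j - 1) i m)

/-- A partition (weakly decreasing list of positive parts) of type
`(k-1, 2J, k-i)`: no repeated odd parts, difference at least `2` at distance
`k-1` (strictly greater than `2` from even parts), smallest part exceeding `2J`,
and at most `k-i` parts equal to `2J+1` or `2J+2`. -/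
def IsTypePartition (k J i n : ℕ) (b : List ℕ) : Prop :=
  b.Pairwise (· ≥ ·) ∧ (∀ x ∈ b, 0 < x) ∧ b.sum = n ∧
  (∀ x, Odd x → b.count x ≤ 1) ∧
  (∀ p, p + (k - 1) < b.length →
    (Odd (b.getD p 0) → b.getD (p + (k - 1)) 0 + 2 ≤ b.getD p 0) ∧
    (Even (b.getD p 0) → b.getD (p + (k - 1)) 0 + 3 ≤ b.getD p 0)) ∧
  (∀ x ∈ b, 2 * J < x) ∧
  b.count (2 * J + 1) + b.count (2 * J + 2) ≤ k - i

/-!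
Induction on `j`, starting from `j = J`. For a weakly decreasing list the difference
conditions say exactly that every window `{2m, 2m+1, 2m+2}` contains at most `k - 1` parts, and
"at most `k - i` parts equal to `2J+1` or `2J+2`" says the same for `b` followed by `i - 1`
phantom parts `2J`. In this form a partition counted at level `j + 1` is `l - 1` parts `2j+2`,
`ε ≤ 1` parts `2j+1`, and a partition counted at level `j` with `m - 1` parts `2j` (phantoms
included), where the window at `j` forces `m ≤ k - l + 1 - ε`: this is the recursion. At level
`J` only the phantom parts remain, which gives `δ_{i,l}`.
-/

open List

namespace GollnitzGordon

def GapCondition (k : ℕ) (b : List ℕ) : Prop :=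
  ∀ p, p + (k - 1) < b.length →
    (Odd (b.getD p 0) → b.getD (p + (k - 1)) 0 + 2 ≤ b.getD p 0) ∧
    (Even (b.getD p 0) → b.getD (p + (k - 1)) 0 + 3 ≤ b.getD p 0)

def windowCount (b : List ℕ) (m : ℕ) : ℕ :=
  b.count (2 * m) + b.count (2 * m + 1) + b.count (2 * m + 2)

theorem count_eq_zero_of_forall_le {c : List ℕ} {N y : ℕ} (hc : ∀ x ∈ c, x ≤ N) (hy : N < y) :
    c.count y = 0 :=
  count_eq_zero_of_not_mem fun hmem => by have := hc y hmem; omega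

theorem count_eq_zero_of_forall_lt {c : List ℕ} {N y : ℕ} (hc : ∀ x ∈ c, N < x) (hy : y ≤ N) :
    c.count y = 0 :=
  count_eq_zero_of_not_mem fun hmem => by have := hc y hmem; omega

theorem lt_countP_le_iff {b : List ℕ} (hb : b.Pairwise (· ≥ ·)) (x : ℕ) {q : ℕ}
    (hq : q < b.length) : q < b.countP (fun y => x ≤ y) ↔ x ≤ b[q] := by
  induction b generalizing q with
  | nil => simp at hq
  | cons a t ih =>
    obtain ⟨hat, ht⟩ := pairwise_cons.mp hb
    by_cases hxa : x ≤ a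
    · cases q with
      | zero => simp [hxa]
      | succ q => simpa [countP_cons, hxa] using ih ht (by simpa using hq)
    · have hlt : ∀ y ∈ t, ¬ x ≤ y := fun y hy => by have := hat y hy; omega
      have h0 : t.countP (fun y => x ≤ y) = 0 := countP_eq_zero.mpr (by simpa using hlt)
      cases q with
      | zero => simp [hxa, h0]
      | succ q => simpa [countP_cons, hxa, h0] using hlt _ (getElem_mem _)

theorem countP_le_eq_windowCount_add (b : List ℕ) (m : ℕ) :
    b.countP (fun y => 2 * m ≤ y) = windowCount b m + b.countP (fun y => 2 * m + 3 ≤ y) := by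
  induction b with
  | nil => simp [windowCount]
  | cons a t ih =>
    simp only [windowCount, countP_cons, count_cons] at ih ⊢
    split_ifs <;> simp_all <;> omega

theorem succ_le_windowCount {b : List ℕ} (hb : b.Pairwise (· ≥ ·)) {m p d : ℕ}
    (hpd : p + d < b.length) (hlow : 2 * m ≤ b[p + d]) (hhigh : b[p] < 2 * m + 3) :
    d + 1 ≤ windowCount b m := by
  have h1 := (lt_countP_le_iff hb (2 * m) hpd).mpr hlow
  have h2 := mt (lt_countP_le_iff hb (2 * m + 3) (q := p) (by omega)).mp (by omega)
  have := countP_le_eq_windowCount_add b m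
  omega

theorem gapCondition_iff_windowCount_le {k : ℕ} {b : List ℕ} (hb : b.Pairwise (· ≥ ·)) :
    GapCondition k b ↔ ∀ m, windowCount b m ≤ k - 1 := by
  constructor
  · intro hgap m
    by_contra! hwin
    -- the parts in the window at `m` occupy the positions `A, A + 1, …`
    set A := b.countP (fun y => 2 * m + 3 ≤ y)
    have hsplit := countP_le_eq_windowCount_add b m
    have hlen : A + (k - 1) < b.length := by
      have := countP_le_length (p := fun y => decide (2 * m ≤ y)) (l := b)
      omega
    have hlow := (lt_countP_le_iff hb (2 * m) hlen).mp (by omega)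
    have hhigh := mt (lt_countP_le_iff hb (2 * m + 3) (q := A) (by omega)).mpr (by omega)
    have := hgap A hlen
    rw [getD_eq_getElem _ _ hlen, getD_eq_getElem _ _ (by omega)] at this
    rcases Nat.even_or_odd b[A] with hpar | hpar
    · have := this.2 hpar; omega
    · have := this.1 hpar; rw [Nat.odd_iff] at hpar; omega
  · intro hwin p hp
    rw [getD_eq_getElem _ _ hp, getD_eq_getElem _ _ (by omega)]
    constructor
    · intro hodd
      by_contra! hclose
      rw [Nat.odd_iff] at hodd
      have := succ_le_windowCount hb (m := b[p] / 2) hp (by omega) (by omega)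
      have := hwin (b[p] / 2)
      omega
    · intro heven
      by_contra! hclose
      rw [Nat.even_iff] at heven
      have := succ_le_windowCount hb (m := b[p] / 2 - 1) hp (by omega) (by omega)
      have := hwin (b[p] / 2 - 1)
      omega

theorem windowCount_append_replicate_le_iff {k J i : ℕ} {b : List ℕ} (hi : 1 ≤ i)
    (hik : i ≤ k) (hb : ∀ x ∈ b, 2 * J < x) :
    (∀ m, windowCount (b ++ replicate (i - 1) (2 * J)) m ≤ k - 1) ↔
      (∀ m, windowCount b m ≤ k - 1) ∧ b.count (2 * J + 1) + b.count (2 * J + 2) ≤ k - i := by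
  have hsmall : ∀ y ≤ 2 * J, b.count y = 0 := fun _ => count_eq_zero_of_forall_lt hb
  simp only [windowCount, count_append, count_replicate, beq_iff_eq]
  constructor
  · intro h
    refine ⟨fun m => le_trans (by split_ifs <;> omega) (h m), ?_⟩
    have := h J
    have := hsmall (2 * J) le_rfl
    split_ifs at * <;> omega
  · rintro ⟨h, hJ⟩ m
    rcases eq_or_ne m J with rfl | hmJ
    · have := hsmall (2 * m) le_rfl
      split_ifs <;> omega
    have := h m
    have := hsmall (2 * m)
    have := hsmall (2 * m + 1)
    have := hsmall (2 * m + 2)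
    split_ifs <;> omega

/-- The partitions counted by `h^{(j)}_{i,l}`. The condition "at most `k - i` parts equal to
`2J+1` or `2J+2`" is encoded by `i - 1` phantom parts `2J` appended to `b`, which makes the
conditions uniform in `j ≥ J`. -/
def IsHPartition (k J i j l n : ℕ) (b : List ℕ) : Prop :=
  b.Pairwise (· ≥ ·) ∧ b.sum = n ∧ (∀ x ∈ b, 2 * J < x ∧ x ≤ 2 * j) ∧
    (∀ x, Odd x → b.count x ≤ 1) ∧
    (∀ m, windowCount (b ++ replicate (i - 1) (2 * J)) m ≤ k - 1) ∧
    (b ++ replicate (i - 1) (2 * J)).count (2 * j) = l - 1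

theorem isHPartition_iff_isTypePartition {k J i j l n : ℕ} {b : List ℕ} (hi : 1 ≤ i)
    (hik : i ≤ k) (hj : J + 1 ≤ j) :
    IsHPartition k J i j l n b ↔
      IsTypePartition k J i n b ∧ (∀ x ∈ b, x ≤ 2 * j) ∧ b.count (2 * j) = l - 1 := by
  have hcount : (b ++ replicate (i - 1) (2 * J)).count (2 * j) = b.count (2 * j) := by
    simp only [count_append, count_replicate, beq_iff_eq]
    split_ifs <;> omega
  constructor
  · rintro ⟨hs, hsum, hrange, hodd, hwin, hl⟩
    have hbig : ∀ x ∈ b, 2 * J < x := fun x hx => (hrange x hx).1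
    obtain ⟨hwin, hsmall⟩ := (windowCount_append_replicate_le_iff hi hik hbig).mp hwin
    exact ⟨⟨hs, fun x hx => by have := hbig x hx; omega, hsum, hodd,
      (gapCondition_iff_windowCount_le hs).mpr hwin, hbig, hsmall⟩,
      fun x hx => (hrange x hx).2, hcount ▸ hl⟩
  · rintro ⟨⟨hs, -, hsum, hodd, hgap, hbig, hsmall⟩, hle, hl⟩
    exact ⟨hs, hsum, fun x hx => ⟨hbig x hx, hle x hx⟩, hodd,
      (windowCount_append_replicate_le_iff hi hik hbig).mpr
        ⟨(gapCondition_iff_windowCount_le hs).mp hgap, hsmall⟩, hcount ▸ hl⟩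

def topParts (j a ε : ℕ) : List ℕ :=
  replicate a (2 * (j + 1)) ++ replicate ε (2 * j + 1)

section topParts

variable {j a ε : ℕ} {c : List ℕ}

theorem lt_of_mem_topParts {x : ℕ} (hx : x ∈ topParts j a ε) : 2 * j < x := by
  simp only [topParts, mem_append, mem_replicate] at hx
  omega

theorem count_topParts_append (hc : ∀ x ∈ c, x ≤ 2 * j) (x : ℕ) :
    (topParts j a ε ++ c).count x =
      if x = 2 * (j + 1) then a else if x = 2 * j + 1 then ε else c.count x := by
  simp only [topParts, count_append, count_replicate, beq_iff_eq]
  split_ifs <;> first | omega | (have := count_eq_zero_of_forall_le hc (y := x) (by omega); omega)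

theorem windowCount_topParts_append (hc : ∀ x ∈ c, x ≤ 2 * j) (m : ℕ) :
    windowCount (topParts j a ε ++ c) m =
      windowCount c m + (if m = j then a + ε else 0) + (if m = j + 1 then a else 0) := by
  have hbig : ∀ y, 2 * j < y → c.count y = 0 := fun _ => count_eq_zero_of_forall_le hc
  simp only [windowCount, count_topParts_append hc]
  rcases lt_trichotomy m j with hm | rfl | hm
  · split_ifs <;> omega
  · simp [hbig (2 * m + 1) (by omega), hbig (2 * m + 2) (by omega)]
    split_ifs <;> omega
  · simp [hbig (2 * m) (by omega), hbig (2 * m + 1) (by omega), hbig (2 * m + 2) (by omega)]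
    split_ifs <;> omega

theorem windowCount_topParts_append_le_iff (hc : ∀ x ∈ c, x ≤ 2 * j) (N : ℕ) :
    (∀ m, windowCount (topParts j a ε ++ c) m ≤ N) ↔
      (∀ m, windowCount c m ≤ N) ∧ a + ε + c.count (2 * j) ≤ N := by
  have hbig : ∀ y, 2 * j < y → c.count y = 0 := fun _ => count_eq_zero_of_forall_le hc
  have hj : windowCount c j = c.count (2 * j) := by
    simp [windowCount, hbig (2 * j + 1) (by omega), hbig (2 * j + 2) (by omega)]
  have hj1 : windowCount c (j + 1) = 0 := by
    simp [windowCount, hbig (2 * (j + 1)) (by omega), hbig (2 * (j + 1) + 1) (by omega),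
      hbig (2 * (j + 1) + 2) (by omega)]
  simp only [windowCount_topParts_append hc]
  constructor
  · intro h
    refine ⟨fun m => le_trans (by omega) (h m), ?_⟩
    have := h j
    rw [if_pos rfl, if_neg (by omega)] at this
    omega
  · rintro ⟨h, htop⟩ m
    have := h m
    rcases eq_or_ne m j with rfl | hmj
    · rw [if_pos rfl, if_neg (by omega)]; omega
    rcases eq_or_ne m (j + 1) with rfl | hmj1
    · rw [if_neg hmj, if_pos rfl]; omega
    · rw [if_neg hmj, if_neg hmj1]; omega

theorem pairwise_topParts_append_iff (hc : ∀ x ∈ c, x ≤ 2 * j) :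
    (topParts j a ε ++ c).Pairwise (· ≥ ·) ↔ c.Pairwise (· ≥ ·) := by
  simp only [topParts, pairwise_append, pairwise_replicate, mem_append, mem_replicate]
  constructor
  · exact fun h => h.2.1
  · intro h
    refine ⟨⟨Or.inr le_rfl, Or.inr le_rfl, by omega⟩, h, fun x hx y hy => ?_⟩
    have := lt_of_mem_topParts (by simpa [topParts] using hx)
    have := hc y hy
    omega

theorem forall_odd_count_topParts_append_le_one_iff (hc : ∀ x ∈ c, x ≤ 2 * j) :
    (∀ x, Odd x → (topParts j a ε ++ c).count x ≤ 1) ↔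
      ε ≤ 1 ∧ ∀ x, Odd x → c.count x ≤ 1 := by
  have htop : (topParts j a ε ++ c).count (2 * j + 1) = ε := by
    rw [count_topParts_append hc, if_neg (by omega), if_pos rfl]
  constructor
  · intro h
    exact ⟨htop ▸ h _ (odd_two_mul_add_one j), fun x hx =>
      le_trans ((sublist_append_right _ c).count_le x) (h x hx)⟩
  · rintro ⟨hε, h⟩ x hx
    rw [count_topParts_append hc]
    have := h x hx
    rw [Nat.odd_iff] at hx
    split_ifs <;> omega

theorem sum_topParts_append :
    (topParts j a ε ++ c).sum = 2 * (j + 1) * a + ε * (2 * j + 1) + c.sum := by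
  simp only [topParts, sum_append, sum_replicate, smul_eq_mul]
  ring

theorem filter_topParts_append (hc : ∀ x ∈ c, x ≤ 2 * j) :
    (topParts j a ε ++ c).filter (· ≤ 2 * j) = c := by
  have htop : (topParts j a ε).filter (· ≤ 2 * j) = [] :=
    filter_eq_nil_iff.mpr fun x hx => by have := lt_of_mem_topParts hx; simpa using this
  rw [filter_append, htop, filter_eq_self.mpr (by simpa using hc), nil_append]

end topParts

theorem eq_topParts_append_filter {j : ℕ} {b : List ℕ} (hs : b.Pairwise (· ≥ ·))
    (hb : ∀ x ∈ b, x ≤ 2 * (j + 1)) :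
    b = topParts j (b.count (2 * (j + 1))) (b.count (2 * j + 1)) ++ b.filter (· ≤ 2 * j) := by
  have hf : ∀ x ∈ b.filter (· ≤ 2 * j), x ≤ 2 * j := by simp
  refine Perm.eq_of_pairwise' hs ((pairwise_topParts_append_iff hf).mpr (hs.filter _))
    (perm_iff_count.mpr fun x => ?_)
  rw [count_topParts_append hf]
  split_ifs with h1 h2
  · rw [h1]
  · rw [h2]
  · by_cases hx : x ≤ 2 * j
    · exact (count_filter (by simpa using hx)).symm
    · rw [count_eq_zero_of_forall_le hb (by omega), count_eq_zero_of_forall_le hf (by omega)]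

section Step

variable {k J i j l n ε : ℕ}

theorem isHPartition_succ_topParts_append_iff {c : List ℕ} (hJj : J ≤ j)
    (hc : ∀ x ∈ c, x ≤ 2 * j) :
    IsHPartition k J i (j + 1) l n (topParts j (l - 1) ε ++ c) ↔
      2 * (j + 1) * (l - 1) + ε * (2 * j + 1) ≤ n ∧ ε ≤ 1 ∧
        IsHPartition k J i j ((c ++ replicate (i - 1) (2 * J)).count (2 * j) + 1)
          (n - (2 * (j + 1) * (l - 1) + ε * (2 * j + 1))) c ∧
        l - 1 + ε + (c ++ replicate (i - 1) (2 * J)).count (2 * j) ≤ k - 1 := by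
  have hc' : ∀ x ∈ c ++ replicate (i - 1) (2 * J), x ≤ 2 * j := by
    simp only [mem_append, mem_replicate]
    rintro x (hx | ⟨-, rfl⟩)
    exacts [hc x hx, by omega]
  have hrange : (∀ x ∈ topParts j (l - 1) ε ++ c, 2 * J < x ∧ x ≤ 2 * (j + 1)) ↔
      ∀ x ∈ c, 2 * J < x ∧ x ≤ 2 * j := by
    simp only [topParts, mem_append, mem_replicate]
    constructor
    · exact fun h x hx => ⟨(h x (Or.inr hx)).1, hc x hx⟩
    · rintro h x ((⟨-, rfl⟩ | ⟨-, rfl⟩) | hx)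
      · omega
      · omega
      · have := h x hx; omega
  unfold IsHPartition
  rw [pairwise_topParts_append_iff hc, sum_topParts_append, hrange,
    forall_odd_count_topParts_append_le_one_iff hc, append_assoc,
    windowCount_topParts_append_le_iff hc', count_topParts_append hc', if_pos rfl,
    Nat.add_sub_cancel]
  constructor
  · rintro ⟨hs, hsum, hr, ⟨hε, ho⟩, ⟨hw, hk⟩, -⟩
    exact ⟨by omega, hε, ⟨hs, by omega, hr, ho, hw, rfl⟩, hk⟩
  · rintro ⟨hn, hε, ⟨hs, hsum, hr, ho, hw, -⟩, hk⟩
    exact ⟨hs, by omega, hr, ⟨hε, ho⟩, ⟨hw, hk⟩, rfl⟩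

theorem IsHPartition.eq_topParts_append_filter {b : List ℕ} (hJj : J ≤ j)
    (hb : IsHPartition k J i (j + 1) l n b) (hbε : b.count (2 * j + 1) = ε) :
    b = topParts j (l - 1) ε ++ b.filter (· ≤ 2 * j) := by
  have hcount := hb.2.2.2.2.2
  rw [count_append, count_replicate, if_neg (by simp; omega), Nat.add_zero] at hcount
  have := GollnitzGordon.eq_topParts_append_filter hb.1 fun x hx => (hb.2.2.1 x hx).2
  rwa [hcount, hbε] at this

theorem IsHPartition.filter_le (hJj : J ≤ j) {b : List ℕ}
    (hb : IsHPartition k J i (j + 1) l n b) (hbε : b.count (2 * j + 1) = ε) :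
    (b.filter (· ≤ 2 * j) ++ replicate (i - 1) (2 * J)).count (2 * j) + 1 ∈
        Finset.Icc 1 (k - l + 1 - ε) ∧
      IsHPartition k J i j ((b.filter (· ≤ 2 * j) ++ replicate (i - 1) (2 * J)).count (2 * j) + 1)
        (n - (2 * (j + 1) * (l - 1) + ε * (2 * j + 1))) (b.filter (· ≤ 2 * j)) := by
  rw [hb.eq_topParts_append_filter hJj hbε,
    isHPartition_succ_topParts_append_iff hJj (by simp)] at hb
  exact ⟨Finset.mem_Icc.mpr ⟨by omega, by omega⟩, hb.2.2.1⟩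

theorem IsHPartition.topParts_append (hJj : J ≤ j) (hl : 1 ≤ l) (hlk : l ≤ k) (hε : ε ≤ 1)
    (hn : 2 * (j + 1) * (l - 1) + ε * (2 * j + 1) ≤ n) {m : ℕ}
    (hm : m ∈ Finset.Icc 1 (k - l + 1 - ε)) {c : List ℕ}
    (hc : IsHPartition k J i j m (n - (2 * (j + 1) * (l - 1) + ε * (2 * j + 1))) c) :
    IsHPartition k J i (j + 1) l n (topParts j (l - 1) ε ++ c) := by
  have hcm : (c ++ replicate (i - 1) (2 * J)).count (2 * j) + 1 = m := by
    have := hc.2.2.2.2.2; simp only [Finset.mem_Icc] at hm; omega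
  rw [isHPartition_succ_topParts_append_iff hJj fun x hx => (hc.2.2.1 x hx).2, hcm]
  simp only [Finset.mem_Icc] at hm
  exact ⟨hn, hε, hc, by omega⟩

end Step

theorem finite_isHPartition (k J i j l n : ℕ) : Finite {b // IsHPartition k J i j l n b} := by
  refine Finite.of_injective (fun b => (⟨(b.1 : Multiset ℕ), fun hx => ?_, ?_⟩ : n.Partition))
    fun b c hbc => Subtype.ext ?_
  · have := (b.2.2.2.1 _ hx).1; omega
  · simpa using b.2.2.1
  · exact (Multiset.coe_eq_coe.mp (congrArg Nat.Partition.parts hbc)).eq_of_pairwise' b.2.1 c.2.1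

theorem card_isHPartition_self {k J i l : ℕ} (hi : 1 ≤ i) (hik : i ≤ k) (hl : 1 ≤ l) (n : ℕ) :
    Nat.card {b // IsHPartition k J i J l n b} = if n = 0 ∧ i = l then 1 else 0 := by
  have key : ∀ b, IsHPartition k J i J l n b ↔ b = [] ∧ n = 0 ∧ i = l := by
    intro b
    constructor
    · rintro ⟨-, hsum, hr, -, -, hcount⟩
      obtain rfl : b = [] := eq_nil_iff_forall_not_mem.mpr fun x hx => by
        have := hr x hx; omega
      simp at hsum hcount
      exact ⟨rfl, hsum.symm, by omega⟩
    · rintro ⟨rfl, rfl, rfl⟩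
      refine ⟨Pairwise.nil, rfl, by simp, by simp, fun m => ?_, by simp⟩
      simp only [nil_append, windowCount, count_replicate, beq_iff_eq]
      split_ifs <;> omega
  rw [Nat.card_congr (Equiv.subtypeEquivRight key)]
  by_cases h : n = 0 ∧ i = l <;> simp [h]

theorem card_isHPartition_succ_count_eq {k J i j l ε : ℕ} (hJj : J ≤ j) (hl : 1 ≤ l)
    (hlk : l ≤ k) (hε : ε ≤ 1) (n : ℕ) :
    Nat.card {b // IsHPartition k J i (j + 1) l n b ∧ b.count (2 * j + 1) = ε} =
      if 2 * (j + 1) * (l - 1) + ε * (2 * j + 1) ≤ n then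
        ∑ m ∈ Finset.Icc 1 (k - l + 1 - ε), Nat.card {c // IsHPartition k J i j m
          (n - (2 * (j + 1) * (l - 1) + ε * (2 * j + 1))) c}
      else 0 := by
  set w := 2 * (j + 1) * (l - 1) + ε * (2 * j + 1)
  split_ifs with hn
  · have e : {b // IsHPartition k J i (j + 1) l n b ∧ b.count (2 * j + 1) = ε} ≃
        Σ m : Finset.Icc 1 (k - l + 1 - ε), {c // IsHPartition k J i j m (n - w) c} :=
      { toFun := fun b => ⟨⟨_, (b.2.1.filter_le hJj b.2.2).1⟩,
          ⟨_, (b.2.1.filter_le hJj b.2.2).2⟩⟩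
        invFun := fun mc => ⟨_, mc.2.2.topParts_append hJj hl hlk hε hn mc.1.2, by
          rw [count_topParts_append fun x hx => (mc.2.2.2.2.1 x hx).2, if_neg (by omega),
            if_pos rfl]⟩
        left_inv := fun b => Subtype.ext (b.2.1.eq_topParts_append_filter hJj b.2.2).symm
        right_inv := fun mc => by
          have hc : ∀ x ∈ mc.2.1, x ≤ 2 * j := fun x hx => (mc.2.2.2.2.1 x hx).2
          refine Sigma.subtype_ext (Subtype.ext ?_) (filter_topParts_append hc)
          have := mc.2.2.2.2.2.2
          have := (Finset.mem_Icc.mp mc.1.2).1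
          simp only [filter_topParts_append hc]
          omega }
    have := fun m : Finset.Icc 1 (k - l + 1 - ε) => finite_isHPartition k J i j m (n - w)
    rw [Nat.card_congr e, Nat.card_sigma]
    exact Finset.sum_coe_sort _ fun m => Nat.card {c // IsHPartition k J i j m (n - w) c}
  · have : IsEmpty {b // IsHPartition k J i (j + 1) l n b ∧ b.count (2 * j + 1) = ε} :=
      ⟨fun b => by
        have hb := b.2.1
        rw [hb.eq_topParts_append_filter hJj b.2.2,
          isHPartition_succ_topParts_append_iff hJj (by simp)] at hb
        exact hn hb.1⟩
    exact Nat.card_of_isEmpty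

theorem card_isHPartition_succ (k J i j l n : ℕ) :
    Nat.card {b // IsHPartition k J i (j + 1) l n b} =
      Nat.card {b // IsHPartition k J i (j + 1) l n b ∧ b.count (2 * j + 1) = 0} +
      Nat.card {b // IsHPartition k J i (j + 1) l n b ∧ b.count (2 * j + 1) = 1} := by
  have := finite_isHPartition k J i (j + 1) l n
  rw [← Nat.card_congr (Equiv.sumCompl fun b : {b // IsHPartition k J i (j + 1) l n b} =>
    b.1.count (2 * j + 1) = 0), Nat.card_sum]
  congr 1 <;> apply Nat.card_congr
  · exact Equiv.subtypeSubtypeEquivSubtypeInter (IsHPartition k J i (j + 1) l n)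
      (fun b => b.count (2 * j + 1) = 0)
  · refine (Equiv.subtypeSubtypeEquivSubtypeInter (IsHPartition k J i (j + 1) l n)
      (fun b => ¬ b.count (2 * j + 1) = 0)).trans
      (Equiv.subtypeEquivRight fun b => and_congr_right fun hb => ?_)
    have := hb.2.2.2.1 _ (odd_two_mul_add_one j)
    omega

theorem coeff_eq_card_isHPartition {k J : ℕ} {h : ℕ → ℕ → ℕ → ℤ[X]} (hsys : IsHSystem k J h)
    {j : ℕ} (hj : J ≤ j) {i l : ℕ} (hi : 1 ≤ i) (hik : i ≤ k) (hl : 1 ≤ l) (hlk : l ≤ k)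
    (n : ℕ) : (h j i l).coeff n = Nat.card {b // IsHPartition k J i j l n b} := by
  induction j, hj using Nat.le_induction generalizing l n with
  | base =>
    rw [hsys.1 i l hi hik hl hlk, card_isHPartition_self hi hik hl]
    by_cases hil : i = l <;> by_cases hn : n = 0 <;> simp [hil, hn, coeff_one]
  | succ j hj ih =>
    have hexp : 2 * (j + 1) * l - 1 = 2 * (j + 1) * (l - 1) + 1 * (2 * j + 1) := by
      obtain ⟨l, rfl⟩ := Nat.exists_eq_add_of_le' hl
      rw [Nat.add_sub_cancel]
      ring_nf
      omega
    rw [hsys.2 (j + 1) i l (by omega) hi hik hl hlk, Nat.add_sub_cancel, coeff_add,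
      coeff_X_pow_mul', coeff_X_pow_mul', card_isHPartition_succ,
      card_isHPartition_succ_count_eq hj hl hlk zero_le_one,
      card_isHPartition_succ_count_eq hj hl hlk le_rfl, hexp]
    simp only [zero_mul, add_zero, Nat.sub_zero, Nat.add_sub_cancel, finsetSum_coeff]
    push_cast
    congr 1 <;> split_ifs <;> first
      | rfl
      | exact Finset.sum_congr rfl fun m hm => ih (Finset.mem_Icc.mp hm).1 (by
        have := (Finset.mem_Icc.mp hm).2; omega) _

end GollnitzGordon

theorem h_combinatorial_interpretation_general (k J : ℕ)
    (h : ℕ → ℕ → ℕ → Polynomial ℤ) (hsys : IsHSystem k J h) :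
    ∀ j i l, J + 1 ≤ j → 1 ≤ i → i ≤ k → 1 ≤ l → l ≤ k → ∀ n,
      (h j i l).coeff n =
        (Nat.card {b : List ℕ // IsTypePartition k J i n b ∧
          (∀ x ∈ b, x ≤ 2 * j) ∧ b.count (2 * j) = l - 1} : ℤ) := by
  intro j i l hj hi hik hl hlk n
  rw [GollnitzGordon.coeff_eq_card_isHPartition hsys (by omega) hi hik hl hlk n,
    Nat.card_congr (Equiv.subtypeEquivRight fun b =>
      GollnitzGordon.isHPartition_iff_isTypePartition hi hik hj)]

/-- Combinatorial interpretation of the polynomials `h^{(j)}_{i,l}(q)`: for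
`j ≥ J+1`, the coefficient of `q^n` in `h^{(j)}_{i,l}(q)` counts the partitions
of `n` of type `(k-1, 2J, k-i)` with largest part at most `2j` and exactly
`l-1` parts equal to `2j`. -/
theorem h_combinatorial_interpretation (k J : ℕ) (hk : 2 ≤ k)
    (h : ℕ → ℕ → ℕ → Polynomial ℤ) (hsys : IsHSystem k J h) :
    ∀ j i l, J + 1 ≤ j → 1 ≤ i → i ≤ k → 1 ≤ l → l ≤ k → ∀ n,
      (h j i l).coeff n =
        (Nat.card {b : List ℕ // IsTypePartition k J i n b ∧
          (∀ x ∈ b, x ≤ 2 * j) ∧ b.count (2 * j) = l - 1} : ℤ) :=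
  h_combinatorial_interpretation_general k J h hsys
end

section
/- Fix k ≥ 2, J ≥ 0, and 1 ≤ i ≤ k, and define h^{(j)}_{i,l}(q) by h^{(J)}_{i,l} = δ_{i,l} and the recursion h^{(j)}_{i,l}(q) = q^{2j(l-1)} ∑_{m=1}^{k-l+1} h^{(j-1)}_{i,m}(q) + q^{2jl-1} ∑_{m=1}^{k-l} h^{(j-1)}_{i,m}(q). Then for each l ≥ 2 and each fixed exponent t ≥ 0, the coefficient of q^t in h^{(j)}_{i,l}(q) is 0 for all sufficiently large j; and for l = 1, the coefficient of q^t in h^{(j)}_{i,1}(q) stabilizes as j → ∞, with limiting series h^{(∞)}_{i,1}(q) ∈ ℤ[[q]] equal to the generating function for partitions with no repeated odd parts, difference ≥ 2 at distance k−1 from odd parts and > 2 from even parts (i.e., b_p − b_{p+k-1} ≥ 2 if b_p odd and > 2 if b_p even), smallest part > 2J, and at most k−i parts equal to 2J+1 or 2J+2. -/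
open Polynomial

/-!
For `j ≥ J`, `h^{(j)}_{i,l}` is the generating function of the partitions with parts in
`(2J, 2j]`, no repeated odd part, fewer than `k` parts in every window `{2m, 2m+1, 2m+2}`, and
`l - 1` parts equal to `2j`, where `i - 1` virtual parts equal to `2J` are added to every
partition (they account for the initial condition and for the bound on the parts `2J+1`, `2J+2`).
The recursion is the decomposition obtained by removing the parts `2j+1` and `2j+2`.
The factor `q^{2j(l-1)}` makes the low coefficients vanish for `l ≥ 2`; for `l = 1` and `t < 2j`
the coefficient of `q^t` counts all partitions of `t` with the window conditions, and for a
sorted partition these are exactly the difference conditions at distance `k - 1`.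
-/

namespace List

theorem le_getD_iff_lt_countP {α : Type*} [LinearOrder α] {b : List α}
    (hs : b.Pairwise (· ≥ ·)) (v d : α) {q : ℕ} (hq : q < b.length) :
    v ≤ b.getD q d ↔ q < b.countP (v ≤ ·) := by
  induction b generalizing q with
  | nil => simp at hq
  | cons a b ih =>
    rw [pairwise_cons] at hs
    by_cases hva : v ≤ a
    · cases q with
      | zero => simp [hva]
      | succ q => rw [getD_cons_succ, ih hs.2 (by simpa using hq)]; simp [hva]
    · have hb : b.countP (v ≤ ·) = 0 := countP_eq_zero.2
        fun x hx hvx => hva ((of_decide_eq_true hvx).trans (hs.1 x hx))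
      cases q with
      | zero => simp [hva, hb]
      | succ q => rw [getD_cons_succ, ih hs.2 (by simpa using hq)]; simp [hva, hb]

theorem countP_le_eq_count_add (b : List ℕ) (v : ℕ) :
    b.countP (v ≤ ·) = b.count v + b.countP (v + 1 ≤ ·) := by
  induction b with
  | nil => simp
  | cons a b ih =>
    simp only [countP_cons, count_cons, ih, beq_iff_eq, decide_eq_true_eq]
    split_ifs <;> omega

theorem add_countP_le_iff_exists {b : List ℕ} (hs : b.Pairwise (· ≥ ·)) {k : ℕ} (hk : 1 ≤ k)
    (lo hi : ℕ) :
    k + b.countP (hi + 1 ≤ ·) ≤ b.countP (lo ≤ ·) ↔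
      ∃ p, p + (k - 1) < b.length ∧ b.getD p 0 ≤ hi ∧ lo ≤ b.getD (p + (k - 1)) 0 := by
  have hlen : b.countP (lo ≤ ·) ≤ b.length := countP_le_length
  constructor
  · intro h
    refine ⟨b.countP (hi + 1 ≤ ·), by omega, ?_,
      (le_getD_iff_lt_countP hs lo 0 (by omega)).2 (by omega)⟩
    by_contra! hp
    have := (le_getD_iff_lt_countP hs (hi + 1) 0 (by omega)).1 hp
    omega
  · rintro ⟨p, hp, hphi, hlo⟩
    have h1 := (le_getD_iff_lt_countP hs lo 0 hp).1 hlo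
    have h2 := mt (le_getD_iff_lt_countP hs (hi + 1) 0 (by omega : p < b.length)).2
    omega

end List

namespace Multiset

theorem count_eq_zero_or_le {α : Type*} [LinearOrder α] {b : Multiset α} {n : α}
    (hb : ∀ x ∈ b, x ≤ n) (x : α) :
    x ≤ n ∨ b.count x = 0 :=
  (le_or_gt x n).imp_right fun hx => count_eq_zero.2 fun hm => (hb x hm).not_gt hx

theorem count_eq_zero_or_lt {α : Type*} [LinearOrder α] {b : Multiset α} {n : α}
    (hb : ∀ x ∈ b, n < x) (x : α) :
    n < x ∨ b.count x = 0 :=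
  (lt_or_ge n x).imp_right fun hx => count_eq_zero.2 fun hm => (hb x hm).not_ge hx

theorem natCard_pairwise_ge_list_eq {α : Type*} [LinearOrder α] (P : Multiset α → Prop) :
    Nat.card {b : List α // b.Pairwise (· ≥ ·) ∧ P b} = Nat.card {c : Multiset α // P c} :=
  Nat.card_congr
    { toFun := fun b => ⟨b.1, b.2.2⟩
      invFun := fun c => ⟨c.1.sort (· ≥ ·), pairwise_sort _ _, by
        rw [sort_eq]; exact c.2⟩
      left_inv := fun b => Subtype.ext <| by
        dsimp only
        exact List.Perm.eq_of_pairwise' (pairwise_sort _ _) b.2.1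
          (coe_eq_coe.1 (sort_eq _ _))
      right_inv := fun c => Subtype.ext (sort_eq _ _) }

end Multiset

namespace GollnitzGordon

def WindowBounded (k : ℕ) (c : Multiset ℕ) : Prop :=
  ∀ m, c.count (2 * m) + c.count (2 * m + 1) + c.count (2 * m + 2) < k

theorem parity_gap_iff (v w : ℕ) :
    ((Odd v → w + 2 ≤ v) ∧ (Even v → w + 3 ≤ v)) ↔ ∀ m, ¬ (v ≤ 2 * m + 2 ∧ 2 * m ≤ w) := by
  constructor
  · rintro ⟨hodd, heven⟩ m ⟨hv, hw⟩
    rcases Nat.even_or_odd v with h | h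
    · have := heven h; omega
    · have := hodd h; obtain ⟨r, rfl⟩ := h; omega
  · intro h
    have := h ((v - 1) / 2)
    exact ⟨fun ⟨r, hr⟩ => by omega, fun ⟨r, hr⟩ => by omega⟩

theorem gap_iff_windowBounded {k : ℕ} (hk : 1 ≤ k) {b : List ℕ} (hs : b.Pairwise (· ≥ ·)) :
    (∀ p, p + (k - 1) < b.length →
      (Odd (b.getD p 0) → b.getD (p + (k - 1)) 0 + 2 ≤ b.getD p 0) ∧
      (Even (b.getD p 0) → b.getD (p + (k - 1)) 0 + 3 ≤ b.getD p 0)) ↔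
    WindowBounded k b := by
  have hwin : ∀ m, b.countP (2 * m ≤ ·) = b.count (2 * m) + b.count (2 * m + 1) +
      b.count (2 * m + 2) + b.countP (2 * m + 2 + 1 ≤ ·) := fun m => by
    rw [List.countP_le_eq_count_add, List.countP_le_eq_count_add _ (2 * m + 1),
      List.countP_le_eq_count_add _ (2 * m + 1 + 1)]
    ring
  simp_rw [parity_gap_iff, WindowBounded, Multiset.coe_count]
  refine ⟨fun h m => ?_, fun h p hp m hm => ?_⟩
  · by_contra! hcount
    obtain ⟨p, hp, hm⟩ := (List.add_countP_le_iff_exists hs hk (2 * m) (2 * m + 2)).1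
      (by rw [hwin m]; omega)
    exact h p hp m hm
  · have := (List.add_countP_le_iff_exists hs hk (2 * m) (2 * m + 2)).2 ⟨p, hp, hm⟩
    have := h m
    rw [hwin m] at *
    omega

theorem WindowBounded.count_lt {k : ℕ} {c : Multiset ℕ} (h : WindowBounded k c) (x : ℕ) :
    c.count x < k := by
  obtain ⟨m, rfl | rfl⟩ := Nat.even_or_odd' x
  · have := h m; omega
  · have := h m; omega

theorem windowBounded_replicate {k n : ℕ} (hn : n < k) (x : ℕ) :
    WindowBounded k (Multiset.replicate n x) := by
  intro m
  simp only [Multiset.count_replicate]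
  split_ifs <;> omega

def seed (J i : ℕ) (b : Multiset ℕ) : Multiset ℕ := Multiset.replicate (i - 1) (2 * J) + b

theorem count_seed (J i : ℕ) (b : Multiset ℕ) (x : ℕ) :
    (seed J i b).count x = (if 2 * J = x then i - 1 else 0) + b.count x := by
  rw [seed, Multiset.count_add, Multiset.count_replicate]

theorem windowBounded_seed_iff {k J i : ℕ} (hi : 1 ≤ i) (hik : i ≤ k) {b : Multiset ℕ}
    (hb : ∀ x ∈ b, 2 * J < x) :
    WindowBounded k (seed J i b) ↔
      WindowBounded k b ∧ b.count (2 * J + 1) + b.count (2 * J + 2) ≤ k - i := by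
  have hz := Multiset.count_eq_zero_or_lt hb
  have hJ : (seed J i b).count (2 * J) + (seed J i b).count (2 * J + 1) +
      (seed J i b).count (2 * J + 2) = i - 1 + b.count (2 * J + 1) + b.count (2 * J + 2) := by
    simp only [count_seed]
    have := hz (2 * J)
    split_ifs <;> omega
  constructor
  · intro h
    refine ⟨fun m => ?_, by have := h J; omega⟩
    have := h m
    simp only [count_seed] at this
    omega
  · rintro ⟨h, htop⟩ m
    obtain rfl | hm := eq_or_ne m J
    · omega
    have := h m
    have := hz (2 * m); have := hz (2 * m + 1); have := hz (2 * m + 2)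
    simp only [count_seed]
    split_ifs <;> omega

def extendTop (j a ε : ℕ) (c : Multiset ℕ) : Multiset ℕ :=
  Multiset.replicate a (2 * j + 2) + Multiset.replicate ε (2 * j + 1) + c

theorem count_extendTop (j a ε : ℕ) (c : Multiset ℕ) (x : ℕ) :
    (extendTop j a ε c).count x =
      (if 2 * j + 2 = x then a else 0) + (if 2 * j + 1 = x then ε else 0) + c.count x := by
  simp only [extendTop, Multiset.count_add, Multiset.count_replicate]

theorem mem_extendTop {j a ε x : ℕ} {c : Multiset ℕ} :
    x ∈ extendTop j a ε c ↔ (a ≠ 0 ∧ x = 2 * j + 2 ∨ ε ≠ 0 ∧ x = 2 * j + 1) ∨ x ∈ c := by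
  simp only [extendTop, Multiset.mem_add, Multiset.mem_replicate]

theorem windowBounded_extendTop_iff {k j a ε : ℕ} {c : Multiset ℕ} (hc : ∀ x ∈ c, x ≤ 2 * j) :
    WindowBounded k (extendTop j a ε c) ↔ WindowBounded k c ∧ c.count (2 * j) + ε + a < k := by
  have hz := Multiset.count_eq_zero_or_le hc
  have hlow : ∀ x ≤ 2 * j, (extendTop j a ε c).count x = c.count x := fun x hx => by
    simp only [count_extendTop]
    split_ifs <;> omega
  have htop : (extendTop j a ε c).count (2 * j) + (extendTop j a ε c).count (2 * j + 1) +
      (extendTop j a ε c).count (2 * j + 2) = c.count (2 * j) + ε + a := by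
    simp only [count_extendTop]
    have := hz (2 * j + 1); have := hz (2 * j + 2)
    split_ifs <;> omega
  constructor
  · intro h
    refine ⟨fun m => ?_, htop ▸ h j⟩
    have hj := htop ▸ h j
    rcases lt_trichotomy m j with hm | rfl | hm
    · simpa only [hlow _ (by omega : 2 * m ≤ 2 * j), hlow _ (by omega : 2 * m + 1 ≤ 2 * j),
        hlow _ (by omega : 2 * m + 2 ≤ 2 * j)] using h m
    · have := hz (2 * m + 1); have := hz (2 * m + 2); omega
    · have := hz (2 * m); have := hz (2 * m + 1); have := hz (2 * m + 2); omega
  · rintro ⟨h, hj⟩ m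
    rcases lt_trichotomy m j with hm | rfl | hm
    · simpa only [hlow _ (by omega : 2 * m ≤ 2 * j), hlow _ (by omega : 2 * m + 1 ≤ 2 * j),
        hlow _ (by omega : 2 * m + 2 ≤ 2 * j)] using h m
    · omega
    · have := hz (2 * m); have := hz (2 * m + 1); have := hz (2 * m + 2)
      simp only [count_extendTop]
      split_ifs <;> omega

def Admissible (k J i : ℕ) (b : Multiset ℕ) : Prop :=
  (∀ x ∈ b, 2 * J < x) ∧ (∀ x, Odd x → b.count x ≤ 1) ∧ WindowBounded k (seed J i b)

theorem seed_extendTop (J i j a ε : ℕ) (c : Multiset ℕ) :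
    seed J i (extendTop j a ε c) = extendTop j a ε (seed J i c) := by
  simp only [seed, extendTop]
  abel

theorem admissible_extendTop_iff {k J i j a ε : ℕ} (hJ : J ≤ j) {c : Multiset ℕ}
    (hc : ∀ x ∈ c, x ≤ 2 * j) :
    Admissible k J i (extendTop j a ε c) ↔
      Admissible k J i c ∧ ε ≤ 1 ∧ (seed J i c).count (2 * j) + ε + a < k := by
  have hz := Multiset.count_eq_zero_or_le hc
  have hseed : ∀ x ∈ seed J i c, x ≤ 2 * j := by
    simp only [seed, Multiset.mem_add, Multiset.mem_replicate]
    rintro x (⟨-, rfl⟩ | hx) <;> [omega; exact hc x hx]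
  have hparts : (∀ x ∈ extendTop j a ε c, 2 * J < x) ↔ ∀ x ∈ c, 2 * J < x := by
    refine ⟨fun h x hx => h x (mem_extendTop.2 (Or.inr hx)), fun h x hx => ?_⟩
    rcases mem_extendTop.1 hx with (⟨-, rfl⟩ | ⟨-, rfl⟩) | hx
    · omega
    · omega
    · exact h x hx
  have hodd : (∀ x, Odd x → (extendTop j a ε c).count x ≤ 1) ↔
      (∀ x, Odd x → c.count x ≤ 1) ∧ ε ≤ 1 := by
    simp only [count_extendTop]
    refine ⟨fun h => ⟨fun x hx => ?_, ?_⟩, fun ⟨h, hε⟩ x hx => ?_⟩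
    · have := h x hx
      split_ifs at this <;> omega
    · have := h (2 * j + 1) ⟨j, rfl⟩
      split_ifs at this <;> omega
    · have := h x hx
      have := hz x
      obtain ⟨r, rfl⟩ := hx
      split_ifs <;> omega
  rw [Admissible, Admissible, seed_extendTop, windowBounded_extendTop_iff hseed, hparts, hodd]
  tauto

open Classical in
/-- The partitions enumerated by `h^{(j)}_{i,l}`; the powerset only makes the set finite. -/
noncomputable def model (k J i j l : ℕ) : Finset (Multiset ℕ) :=
  (k • Multiset.range (2 * j + 1)).powerset.toFinset.filter fun b =>
    Admissible k J i b ∧ (∀ x ∈ b, x ≤ 2 * j) ∧ (seed J i b).count (2 * j) + 1 = l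

theorem mem_model {k J i j l : ℕ} {b : Multiset ℕ} :
    b ∈ model k J i j l ↔
      Admissible k J i b ∧ (∀ x ∈ b, x ≤ 2 * j) ∧ (seed J i b).count (2 * j) + 1 = l := by
  classical
  rw [model, Finset.mem_filter, Multiset.mem_toFinset, Multiset.mem_powerset,
    and_iff_right_iff_imp]
  rintro ⟨⟨-, -, hw⟩, hb, -⟩
  refine Multiset.le_iff_count.2 fun x => ?_
  by_cases hx : x ∈ b
  · have hlt := hw.count_lt x
    rw [count_seed] at hlt
    rw [Multiset.count_nsmul, Multiset.count_eq_one_of_mem (Multiset.nodup_range _)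
      (Multiset.mem_range.2 (by have := hb x hx; omega))]
    omega
  · simp [Multiset.count_eq_zero_of_notMem hx]

noncomputable def genPoly (k J i j l : ℕ) : ℤ[X] :=
  ∑ b ∈ model k J i j l, X ^ b.sum

theorem mem_model_self {k J i : ℕ} (hi : 1 ≤ i) (hik : i ≤ k) {l : ℕ} {b : Multiset ℕ} :
    b ∈ model k J i J l ↔ b = 0 ∧ i = l := by
  rw [mem_model]
  constructor
  · rintro ⟨⟨hpos, -, -⟩, hb, hl⟩
    obtain rfl : b = 0 := Multiset.eq_zero_of_forall_notMem fun x hx => by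
      have := hpos x hx
      have := hb x hx
      omega
    simp only [count_seed, Multiset.count_zero, ite_true, add_zero] at hl
    exact ⟨rfl, by omega⟩
  · rintro ⟨rfl, rfl⟩
    refine ⟨⟨by simp, by simp, ?_⟩, by simp, ?_⟩
    · rw [seed, add_zero]
      exact windowBounded_replicate (by omega) _
    · simp only [count_seed, Multiset.count_zero, ite_true, add_zero]
      omega

theorem genPoly_self {k J i : ℕ} (hi : 1 ≤ i) (hik : i ≤ k) (l : ℕ) :
    genPoly k J i J l = if i = l then 1 else 0 := by
  have hmodel : model k J i J l = if i = l then {0} else ∅ := by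
    ext b
    rw [mem_model_self hi hik]
    split_ifs <;> simp [*]
  rw [genPoly, hmodel]
  split_ifs <;> simp

theorem extendTop_count_filter {j : ℕ} {b : Multiset ℕ} (hb : ∀ x ∈ b, x ≤ 2 * j + 2) :
    extendTop j (b.count (2 * j + 2)) (b.count (2 * j + 1)) (b.filter (· ≤ 2 * j)) = b := by
  ext x
  have := Multiset.count_eq_zero_or_le hb x
  rw [count_extendTop, Multiset.count_filter]
  split_ifs <;> subst_vars <;> omega

theorem filter_extendTop {j a ε : ℕ} {c : Multiset ℕ} (hc : ∀ x ∈ c, x ≤ 2 * j) :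
    (extendTop j a ε c).filter (· ≤ 2 * j) = c := by
  ext x
  have := Multiset.count_eq_zero_or_le hc x
  rw [Multiset.count_filter, count_extendTop]
  split_ifs <;> omega

theorem sum_extendTop (j a ε : ℕ) (c : Multiset ℕ) :
    (extendTop j a ε c).sum = 2 * (j + 1) * a + ε * (2 * j + 1) + c.sum := by
  simp only [extendTop, Multiset.sum_add, Multiset.sum_replicate, smul_eq_mul]
  ring

theorem extendTop_mem_model_succ_iff {k J i j l ε : ℕ} (hJ : J ≤ j) (hl : 1 ≤ l)
    {c : Multiset ℕ} (hc : ∀ x ∈ c, x ≤ 2 * j) :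
    extendTop j (l - 1) ε c ∈ model k J i (j + 1) l ↔
      Admissible k J i c ∧ ε ≤ 1 ∧ (seed J i c).count (2 * j) + ε + (l - 1) < k := by
  have hparts : ∀ x ∈ extendTop j (l - 1) ε c, x ≤ 2 * (j + 1) := fun x hx => by
    rcases mem_extendTop.1 hx with (⟨-, rfl⟩ | ⟨-, rfl⟩) | hx
    · omega
    · omega
    · have := hc x hx; omega
  have htop : (seed J i (extendTop j (l - 1) ε c)).count (2 * (j + 1)) + 1 = l := by
    have := Multiset.count_eq_zero_or_le hc (2 * (j + 1))
    rw [seed_extendTop, count_extendTop, count_seed]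
    split_ifs <;> omega
  rw [mem_model, admissible_extendTop_iff hJ hc]
  exact and_iff_left ⟨hparts, htop⟩

theorem eq_extendTop_of_mem_model_succ {k J i j l : ℕ} (hJ : J ≤ j) {b : Multiset ℕ}
    (hb : b ∈ model k J i (j + 1) l) :
    b = extendTop j (l - 1) (b.count (2 * j + 1)) (b.filter (· ≤ 2 * j)) := by
  obtain ⟨-, hb, hl⟩ := mem_model.1 hb
  rw [count_seed, if_neg (by omega), mul_add_one] at hl
  conv_lhs => rw [← extendTop_count_filter hb]
  congr
  omega

theorem sum_filter_model_succ {k J i j l ε : ℕ} (hJ : J ≤ j) (hl : 1 ≤ l) (hlk : l ≤ k)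
    (hε : ε ≤ 1) :
    ∑ b ∈ (model k J i (j + 1) l).filter (·.count (2 * j + 1) = ε), (X : ℤ[X]) ^ b.sum =
      X ^ (2 * (j + 1) * (l - 1) + ε * (2 * j + 1)) *
        ∑ m ∈ Finset.Icc 1 (k - l + 1 - ε), genPoly k J i j m := by
  have hfilter : ∀ b : Multiset ℕ, ∀ x ∈ b.filter (· ≤ 2 * j), x ≤ 2 * j :=
    fun b x hx => (Multiset.mem_filter.1 hx).2
  simp only [genPoly, Finset.mul_sum, ← pow_add]
  rw [Finset.sum_sigma']
  refine Finset.sum_nbij'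
    (fun b => ⟨(seed J i (b.filter (· ≤ 2 * j))).count (2 * j) + 1, b.filter (· ≤ 2 * j)⟩)
    (fun p => extendTop j (l - 1) ε p.2) ?_ ?_ ?_ ?_ ?_
  · intro b hb
    obtain ⟨hb', rfl⟩ := Finset.mem_filter.1 hb
    have hmem := hb'
    rw [eq_extendTop_of_mem_model_succ hJ hb', extendTop_mem_model_succ_iff hJ hl (hfilter b)]
      at hmem
    simp only [Finset.mem_sigma, Finset.mem_Icc, mem_model, and_true]
    exact ⟨⟨le_add_self, by omega⟩, hmem.1, hfilter b⟩
  · rintro ⟨m, c⟩ hp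
    simp only [Finset.mem_sigma, Finset.mem_Icc, mem_model] at hp
    obtain ⟨⟨hm1, hm⟩, hadm, hc, rfl⟩ := hp
    have := Multiset.count_eq_zero_or_le hc (2 * j + 1)
    dsimp only
    refine Finset.mem_filter.2 ⟨(extendTop_mem_model_succ_iff hJ hl hc).2 ⟨hadm, hε, by omega⟩, ?_⟩
    rw [count_extendTop]
    split_ifs <;> omega
  · intro b hb
    obtain ⟨hb', rfl⟩ := Finset.mem_filter.1 hb
    exact (eq_extendTop_of_mem_model_succ hJ hb').symm
  · rintro ⟨m, c⟩ hp
    simp only [Finset.mem_sigma, mem_model] at hp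
    obtain ⟨-, -, hc, rfl⟩ := hp
    simp only [filter_extendTop hc]
  · intro b hb
    obtain ⟨hb', rfl⟩ := Finset.mem_filter.1 hb
    conv_lhs => rw [eq_extendTop_of_mem_model_succ hJ hb', sum_extendTop]

theorem genPoly_succ {k J i j l : ℕ} (hJ : J ≤ j) (hl : 1 ≤ l) (hlk : l ≤ k) :
    genPoly k J i (j + 1) l =
      X ^ (2 * (j + 1) * (l - 1)) * ∑ m ∈ Finset.Icc 1 (k - l + 1), genPoly k J i j m +
        X ^ (2 * (j + 1) * l - 1) * ∑ m ∈ Finset.Icc 1 (k - l), genPoly k J i j m := by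
  have hodd : ∀ b ∈ model k J i (j + 1) l, b.count (2 * j + 1) ≠ 0 ↔ b.count (2 * j + 1) = 1 :=
    fun b hb => by have := (mem_model.1 hb).1.2.1 (2 * j + 1) ⟨j, rfl⟩; omega
  have hexp : 2 * (j + 1) * (l - 1) + 1 * (2 * j + 1) = 2 * (j + 1) * l - 1 := by
    obtain ⟨l, rfl⟩ := Nat.exists_eq_add_of_le' hl
    rw [Nat.add_sub_cancel, one_mul, mul_add_one (2 * (j + 1)) l]
    omega
  rw [genPoly, ← Finset.sum_filter_add_sum_filter_not _ (·.count (2 * j + 1) = 0),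
    Finset.filter_congr hodd, sum_filter_model_succ hJ hl hlk zero_le_one,
    sum_filter_model_succ hJ hl hlk le_rfl, hexp, zero_mul, add_zero, Nat.sub_zero,
    Nat.add_sub_cancel]

theorem coeff_genPoly (k J i j l t : ℕ) :
    (genPoly k J i j l).coeff t = ((model k J i j l).filter (·.sum = t)).card := by
  simp [genPoly, finsetSum_coeff, coeff_X_pow, eq_comm]

theorem mem_filter_model_one_iff {k J i j t : ℕ} (hJ : J < j) (ht : t < 2 * j)
    {c : Multiset ℕ} :
    c ∈ (model k J i j 1).filter (·.sum = t) ↔ Admissible k J i c ∧ c.sum = t := by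
  rw [Finset.mem_filter, mem_model]
  constructor
  · rintro ⟨⟨h, -, -⟩, hsum⟩
    exact ⟨h, hsum⟩
  rintro ⟨h, rfl⟩
  have hle : ∀ x ∈ c, x ≤ c.sum := fun x hx => Multiset.le_sum_of_mem hx
  refine ⟨⟨h, fun x hx => (hle x hx).trans ht.le, ?_⟩, rfl⟩
  rw [count_seed, if_neg (by omega), Multiset.count_eq_zero.2 fun hx => by
    have := hle _ hx; omega]

theorem isTypePartition_iff {k J i n : ℕ} (hi : 1 ≤ i) (hik : i ≤ k) {b : List ℕ} :
    IsTypePartition k J i n b ↔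
      b.Pairwise (· ≥ ·) ∧ (Admissible k J i b ∧ (b : Multiset ℕ).sum = n) := by
  have hk : 1 ≤ k := hi.trans hik
  simp only [IsTypePartition, Admissible, ← Multiset.coe_count]
  constructor
  · rintro ⟨hs, -, hsum, hodd, hgap, hpos, hbd⟩
    exact ⟨hs, ⟨hpos, hodd, (windowBounded_seed_iff hi hik hpos).2
      ⟨(gap_iff_windowBounded hk hs).1 hgap, hbd⟩⟩, hsum⟩
  · rintro ⟨hs, ⟨hpos, hodd, hw⟩, hsum⟩
    obtain ⟨hw, hbd⟩ := (windowBounded_seed_iff hi hik hpos).1 hw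
    exact ⟨hs, fun x hx => (Nat.zero_le _).trans_lt (hpos x hx), hsum, hodd,
      (gap_iff_windowBounded hk hs).2 hw, hpos, hbd⟩

theorem card_typePartition_eq_card {k J i j t : ℕ} (hi : 1 ≤ i) (hik : i ≤ k)
    (hJ : J < j) (ht : t < 2 * j) :
    Nat.card {b : List ℕ // IsTypePartition k J i t b} =
      ((model k J i j 1).filter (·.sum = t)).card := by
  simp_rw [isTypePartition_iff hi hik]
  refine (Multiset.natCard_pairwise_ge_list_eq
    fun c => Admissible k J i c ∧ c.sum = t).trans ?_
  rw [← Nat.card_eq_finsetCard]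
  exact Nat.card_congr (Equiv.subtypeEquivRight fun c =>
    (mem_filter_model_one_iff hJ ht).symm)

end GollnitzGordon

namespace IsHSystem

variable {k J i : ℕ} {h : ℕ → ℕ → ℕ → ℤ[X]}

open GollnitzGordon

theorem eq_genPoly (hsys : IsHSystem k J h) (hi : 1 ≤ i) (hik : i ≤ k) {j : ℕ} (hj : J ≤ j)
    {l : ℕ} (hl : 1 ≤ l) (hlk : l ≤ k) :
    h j i l = genPoly k J i j l := by
  induction j, hj using Nat.le_induction generalizing l with
  | base => rw [hsys.1 i l hi hik hl hlk, genPoly_self hi hik]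
  | succ j hj ih =>
    have hsum : ∀ n ≤ k, ∑ m ∈ Finset.Icc 1 n, h j i m =
        ∑ m ∈ Finset.Icc 1 n, genPoly k J i j m := fun n hn =>
      Finset.sum_congr rfl fun m hm => by
        obtain ⟨hm1, hmn⟩ := Finset.mem_Icc.1 hm
        exact ih hm1 (hmn.trans hn)
    rw [hsys.2 (j + 1) i l (by omega) hi hik hl hlk, Nat.add_sub_cancel, hsum _ (by omega),
      hsum _ (by omega), genPoly_succ hj hl hlk]

theorem coeff_eq_zero_of_lt (hsys : IsHSystem k J h) (hi : 1 ≤ i) (hik : i ≤ k) {l : ℕ} (hl : 2 ≤ l)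
    (hlk : l ≤ k) {j t : ℕ} (hj : J < j) (ht : t < 2 * j) : (h j i l).coeff t = 0 := by
  have h1 : 2 * j ≤ 2 * j * (l - 1) := Nat.le_mul_of_pos_right _ (by omega)
  have h2 : 2 * j ≤ 2 * j * l - 1 := by
    have := Nat.mul_le_mul_left (2 * j) hl
    omega
  rw [hsys.2 j i l hj hi hik (by omega) hlk, coeff_add, coeff_X_pow_mul', coeff_X_pow_mul',
    if_neg (by omega), if_neg (by omega), add_zero]

theorem coeff_one_eq_card (hsys : IsHSystem k J h) (hi : 1 ≤ i) (hik : i ≤ k) {j t : ℕ} (hj : J < j)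
    (ht : t < 2 * j) :
    (h j i 1).coeff t = Nat.card {b : List ℕ // IsTypePartition k J i t b} := by
  rw [hsys.eq_genPoly hi hik hj.le le_rfl (hi.trans hik), coeff_genPoly,
    card_typePartition_eq_card hi hik hj ht]

end IsHSystem

theorem h_limit_general (k J : ℕ) (i : ℕ) (hi1 : 1 ≤ i) (hik : i ≤ k)
    (h : ℕ → ℕ → ℕ → Polynomial ℤ) (hsys : IsHSystem k J h) :
    (∀ l, 2 ≤ l → l ≤ k → ∀ t : ℕ, ∃ Jt, ∀ j, Jt ≤ j → (h j i l).coeff t = 0) ∧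
    ∃ hinf : PowerSeries ℤ,
      (∀ t : ℕ, ∃ Jt, ∀ j, Jt ≤ j →
        (h j i 1).coeff t = PowerSeries.coeff t hinf) ∧
      (∀ n : ℕ, PowerSeries.coeff n hinf =
        (Nat.card {b : List ℕ // IsTypePartition k J i n b} : ℤ)) := by
  refine ⟨fun l hl hlk t => ⟨J + t + 1, fun j hj => hsys.coeff_eq_zero_of_lt hi1 hik hl hlk
      (by omega) (by omega)⟩,
    PowerSeries.mk fun n => (Nat.card {b : List ℕ // IsTypePartition k J i n b} : ℤ),
    fun t => ⟨J + t + 1, fun j hj => ?_⟩, fun n => PowerSeries.coeff_mk _ _⟩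
  rw [PowerSeries.coeff_mk, hsys.coeff_one_eq_card hi1 hik (by omega) (by omega)]

/-- For `l ≥ 2` every fixed coefficient of `h^{(j)}_{i,l}(q)` is eventually `0`
as `j → ∞`, and for `l = 1` the coefficients stabilize, the limit
`h^{(∞)}_{i,1}(q) ∈ ℤ⟦q⟧` being the generating function for partitions of type
`(k-1, 2J, k-i)`. -/
theorem h_limit (k J : ℕ) (hk : 2 ≤ k) (i : ℕ) (hi1 : 1 ≤ i) (hik : i ≤ k)
    (h : ℕ → ℕ → ℕ → Polynomial ℤ) (hsys : IsHSystem k J h) :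
    (∀ l, 2 ≤ l → l ≤ k → ∀ t : ℕ, ∃ Jt, ∀ j, Jt ≤ j → (h j i l).coeff t = 0) ∧
    ∃ hinf : PowerSeries ℤ,
      (∀ t : ℕ, ∃ Jt, ∀ j, Jt ≤ j →
        (h j i 1).coeff t = PowerSeries.coeff t hinf) ∧
      (∀ n : ℕ, PowerSeries.coeff n hinf =
        (Nat.card {b : List ℕ // IsTypePartition k J i n b} : ℤ)) :=
  h_limit_general k J i hi1 hik h hsys
end

section
/- Suppose (J_l(q))_{l≥1} and (S_l(q))_{l≥1} are two sequences of formal power series in q with constant term 1, both satisfying the recursions G_{(k-1)j+i}(q) = [G_{(k-1)(j-1)+k-i+1}(q) − G_{(k-1)(j-1)+k-i+2}(q)] / q^{2j(i-1)} − q^{-1} G_{(k-1)j+i-1}(q) for all j ≥ 1, 2 ≤ i ≤ k (with the edge-matching convention G_{(k-1)j+1} = G_{(k-1)(j-1)+k}), and both satisfying the Empirical Hypothesis: G_{(k-1)j+i}(q) ∈ 1 + q^{2j+1} ℤ[[q]] for all j ≥ 0, 1 ≤ i ≤ k. Then J_l(q) = S_l(q) for all l ≥ 1. -/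
/-- The property that a sequence of formal power series (indexed by `l ≥ 1`)
satisfies the Göllnitz–Gordon–Andrews recursions
`G_{(k-1)j+i} = (G_{(k-1)(j-1)+k-i+1} - G_{(k-1)(j-1)+k-i+2})/q^{2j(i-1)}
  - q⁻¹ G_{(k-1)j+i-1}` (`j ≥ 1`, `2 ≤ i ≤ k`), in the field of formal Laurent
series (the edge-matching convention `G_{(k-1)j+1} = G_{(k-1)(j-1)+k}` holds
automatically since `(k-1)j + 1 = (k-1)(j-1) + k`). -/
def SatisfiesGGARecursion (k : ℕ) (G : ℕ → PowerSeries ℚ) : Prop :=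
  ∀ j i, 1 ≤ j → 2 ≤ i → i ≤ k →
    ((G ((k - 1) * j + i) : PowerSeries ℚ) : LaurentSeries ℚ) =
      ((G ((k - 1) * (j - 1) + (k - i + 1)) : PowerSeries ℚ)
          - (G ((k - 1) * (j - 1) + (k - i + 2)) : PowerSeries ℚ)) /
        ((PowerSeries.X : PowerSeries ℚ) : LaurentSeries ℚ) ^ (2 * j * (i - 1)) -
      ((PowerSeries.X : PowerSeries ℚ) : LaurentSeries ℚ)⁻¹ *
        ((G ((k - 1) * j + (i - 1)) : PowerSeries ℚ) : LaurentSeries ℚ)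

/-- The Empirical Hypothesis for a sequence:
`G_{(k-1)j+i} ∈ 1 + q^{2j+1} ℤ⟦q⟧` for all `j ≥ 0`, `1 ≤ i ≤ k`. -/
def SatisfiesEH (k : ℕ) (G : ℕ → PowerSeries ℚ) : Prop :=
  ∀ j i, 1 ≤ i → i ≤ k → ∃ γ : PowerSeries ℤ,
    G ((k - 1) * j + i) = 1 + PowerSeries.X ^ (2 * j + 1) *
      PowerSeries.map (Int.castRingHom ℚ) γ

open PowerSeries

/-!
The recursions are linear, so the difference `D = J - S` satisfies them as well, and once the
denominators are cleared they say `D_l - D_{l+1} = q^{e+1} D_{b+1} + q^e D_b` with `e, b ≥ 1`,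
for every `l ≥ 1`. Hence if `q^n` divides every `D_l`, then `q^{n+1}` divides every
`D_l - D_{l+t}`; the Empirical Hypothesis makes `q^{n+1}` divide `D_{l+t}` once `t` is large, so
`q^{n+1}` divides `D_l`. Thus every `D_l` is divisible by all powers of `q`, i.e. `D_l = 0`.
-/

theorem PowerSeries.sub_eq_of_coe_eq_div_X_pow_sub {K : Type*} [Field K] {A B C D : K⟦X⟧}
    {e : ℕ} (he : 1 ≤ e)
    (h : (A : LaurentSeries K) = ((B : LaurentSeries K) - (C : LaurentSeries K)) /
      ((X : K⟦X⟧) : LaurentSeries K) ^ e -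
        ((X : K⟦X⟧) : LaurentSeries K)⁻¹ * (D : LaurentSeries K)) :
    B - C = X ^ e * A + X ^ (e - 1) * D := by
  have hX : ((X : K⟦X⟧) : LaurentSeries K) ≠ 0 := by
    rw [Ne, ← map_zero (HahnSeries.ofPowerSeries ℤ K), HahnSeries.ofPowerSeries_injective.eq_iff]
    exact X_ne_zero
  obtain ⟨e, rfl⟩ := Nat.exists_eq_add_of_le' he
  apply HahnSeries.ofPowerSeries_injective (Γ := ℤ)
  simp only [map_sub, map_add, map_mul, map_pow, h, Nat.add_sub_cancel]
  field_simp
  ring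

theorem PowerSeries.eq_zero_of_forall_X_pow_dvd {R : Type*} [Semiring R] {f : R⟦X⟧}
    (h : ∀ n, X ^ n ∣ f) : f = 0 := by
  ext n
  exact X_pow_dvd_iff.mp (h (n + 1)) n n.lt_succ_self

theorem Nat.exists_eq_mul_add_of_one_le {d l : ℕ} (hd : 1 ≤ d) (hl : 1 ≤ l) :
    ∃ j m, 1 ≤ m ∧ m ≤ d ∧ l = d * j + m :=
  ⟨(l - 1) / d, (l - 1) % d + 1, by omega, Nat.mod_lt _ hd, by
    have := Nat.div_add_mod (l - 1) d; omega⟩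

theorem SatisfiesEH.X_pow_dvd_sub {k : ℕ} {J S : ℕ → ℚ⟦X⟧} (hJ : SatisfiesEH k J)
    (hS : SatisfiesEH k S) {j i : ℕ} (hi : 1 ≤ i) (hik : i ≤ k) :
    X ^ (2 * j + 1) ∣ J ((k - 1) * j + i) - S ((k - 1) * j + i) := by
  obtain ⟨γ, hγ⟩ := hJ j i hi hik
  obtain ⟨δ, hδ⟩ := hS j i hi hik
  rw [hγ, hδ, add_sub_add_left_eq_sub, ← mul_sub]
  exact dvd_mul_right _ _

namespace SatisfiesGGARecursion

variable {k : ℕ} {G : ℕ → ℚ⟦X⟧}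

theorem sub {J S : ℕ → ℚ⟦X⟧} (hJ : SatisfiesGGARecursion k J)
    (hS : SatisfiesGGARecursion k S) : SatisfiesGGARecursion k (J - S) := by
  intro j i hj hi hik
  simp only [Pi.sub_apply, map_sub, hJ j i hj hi hik, hS j i hj hi hik]
  ring

/-- Writing `l = (k-1)j + m` with `1 ≤ m ≤ k-1`, this is the recursion at `(j+1, k-m+1)`. -/
theorem exists_sub_succ_eq (hG : SatisfiesGGARecursion k G) (hk : 2 ≤ k) {l : ℕ} (hl : 1 ≤ l) :
    ∃ e b, 1 ≤ e ∧ 1 ≤ b ∧ G l - G (l + 1) = X ^ (e + 1) * G (b + 1) + X ^ e * G b := by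
  obtain ⟨j, m, hm, hmk, rfl⟩ := Nat.exists_eq_mul_add_of_one_le (d := k - 1) (by omega) hl
  have he : 2 ≤ 2 * (j + 1) * (k - m) := by
    have : 1 ≤ k - m := by omega
    nlinarith
  obtain ⟨e, he⟩ : ∃ e, 2 * (j + 1) * (k - m) = e + 2 := ⟨_, (Nat.sub_add_cancel he).symm⟩
  have hrec := hG (j + 1) (k - m + 1) (by omega) (by omega) (by omega)
  simp only [Nat.add_sub_cancel] at hrec
  rw [he, show k - (k - m + 1) + 2 = m + 1 by omega, show k - (k - m + 1) + 1 = m by omega,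
    show (k - 1) * (j + 1) + (k - m + 1) = (k - 1) * (j + 1) + (k - m) + 1 by omega] at hrec
  have h := PowerSeries.sub_eq_of_coe_eq_div_X_pow_sub (by omega) hrec
  rw [← add_assoc] at h
  exact ⟨e + 1, (k - 1) * (j + 1) + (k - m), by omega, by omega, h⟩

theorem X_pow_succ_dvd_sub_succ (hG : SatisfiesGGARecursion k G) (hk : 2 ≤ k) {n : ℕ}
    (hn : ∀ m, 1 ≤ m → X ^ n ∣ G m) {l : ℕ} (hl : 1 ≤ l) : X ^ (n + 1) ∣ G l - G (l + 1) := by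
  obtain ⟨e, b, he, hb, h⟩ := hG.exists_sub_succ_eq hk hl
  rw [h, pow_succ']
  exact dvd_add (mul_dvd_mul (dvd_pow_self X (by omega)) (hn _ (by omega)))
    (mul_dvd_mul (dvd_pow_self X (by omega)) (hn b hb))

theorem X_pow_succ_dvd_sub_add (hG : SatisfiesGGARecursion k G) (hk : 2 ≤ k) {n : ℕ}
    (hn : ∀ m, 1 ≤ m → X ^ n ∣ G m) {l : ℕ} (hl : 1 ≤ l) (t : ℕ) :
    X ^ (n + 1) ∣ G l - G (l + t) := by
  induction t with
  | zero => simp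
  | succ t ih =>
    simpa only [sub_add_sub_cancel, add_assoc] using dvd_add ih (hG.X_pow_succ_dvd_sub_succ hk hn (l := l + t) (by omega))

theorem eq_zero_of_X_pow_dvd (hG : SatisfiesGGARecursion k G) (hk : 2 ≤ k)
    (hdvd : ∀ j i, 1 ≤ i → i ≤ k → X ^ (2 * j + 1) ∣ G ((k - 1) * j + i)) {l : ℕ}
    (hl : 1 ≤ l) : G l = 0 := by
  suffices h : ∀ n l, 1 ≤ l → X ^ n ∣ G l from eq_zero_of_forall_X_pow_dvd fun n => h n l hl
  intro n
  induction n with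
  | zero => simp
  | succ n ih =>
    intro l hl
    obtain ⟨j, i, hi, hik, rfl⟩ := Nat.exists_eq_mul_add_of_one_le (d := k - 1) (by omega) hl
    have hfar : X ^ (n + 1) ∣ G ((k - 1) * j + i + (k - 1) * n) := by
      rw [show (k - 1) * j + i + (k - 1) * n = (k - 1) * (j + n) + i by ring]
      exact (pow_dvd_pow X (by omega)).trans (hdvd _ i hi (by omega))
    simpa only [sub_add_cancel] using
      dvd_add (hG.X_pow_succ_dvd_sub_add hk ih hl ((k - 1) * n)) hfar

end SatisfiesGGARecursion

theorem uniqueness_from_EH_general (k : ℕ) (hk : 2 ≤ k) (Jser Sser : ℕ → PowerSeries ℚ)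
    (hJrec : SatisfiesGGARecursion k Jser) (hSrec : SatisfiesGGARecursion k Sser)
    (hJEH : SatisfiesEH k Jser) (hSEH : SatisfiesEH k Sser) :
    ∀ l, 1 ≤ l → Jser l = Sser l := fun _ hl =>
  sub_eq_zero.mp <| (hJrec.sub hSrec).eq_zero_of_X_pow_dvd hk
    (fun _ _ hi hik => hJEH.X_pow_dvd_sub hSEH hi hik) hl

/-- Uniqueness: two sequences of formal power series with constant term `1`
satisfying the Göllnitz–Gordon–Andrews recursions and the Empirical Hypothesis
coincide. -/
theorem uniqueness_from_EH (k : ℕ) (hk : 2 ≤ k) (Jser Sser : ℕ → PowerSeries ℚ)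
    (hJ0 : ∀ l, 1 ≤ l → PowerSeries.constantCoeff (Jser l) = 1)
    (hS0 : ∀ l, 1 ≤ l → PowerSeries.constantCoeff (Sser l) = 1)
    (hJrec : SatisfiesGGARecursion k Jser) (hSrec : SatisfiesGGARecursion k Sser)
    (hJEH : SatisfiesEH k Jser) (hSEH : SatisfiesEH k Sser) :
    ∀ l, 1 ≤ l → Jser l = Sser l :=
  uniqueness_from_EH_general k hk Jser Sser hJrec hSrec hJEH hSEH
end

section
/- For k ≥ 2, J ≥ 0, and 1 ≤ i ≤ k, the product ∏_{m≥1, m≢0,±i (mod 2k+1)} (1−q^m)^{-1} evaluated through the Lepowsky–Zhu recursion at shelf J, namely the series G_{(k-1)J+i}(q) = [∑_{λ≥0} (-1)^λ q^{(2k+1)·C(λ,2)+(k(J+1)+i)λ}(1−q^{λ+1})⋯(1−q^{λ+J})(1−q^{(k-i+1)(2λ+J+1)})] / ∏_{n≥1}(1−q^n), is the generating function for partitions with difference at least 2 at distance k−1 (b_p − b_{p+k-1} ≥ 2), smallest part greater than J, and part J+1 appearing at most k−i times. -/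
open PowerSeries Finset

/-- The Lepowsky–Zhu closed form for Gordon's identities:
`[∑_{λ ≥ 0} (-1)^λ q^{(2k+1)·C(λ,2)+(k(j+1)+i)λ} (1-q^{λ+1})⋯(1-q^{λ+j})
  (1-q^{(k-i+1)(2λ+j+1)})] / ∏_{n ≥ 1}(1-q^n)`. -/
noncomputable def GordonCf (k j i : ℕ) : PowerSeries ℚ :=
  (sProd (fun m => 1 ≤ m))⁻¹ * sSum (fun l =>
    (-1 : PowerSeries ℚ) ^ l *
    PowerSeries.X ^ ((2 * k + 1) * l.choose 2 + (k * (j + 1) + i) * l) *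
    (∏ t ∈ Finset.Icc 1 j, (1 - PowerSeries.X ^ (l + t))) *
    (1 - PowerSeries.X ^ ((k - i + 1) * (2 * l + j + 1))))

/-!
Both sides are families `F J i` (`1 ≤ i ≤ k`) satisfying `F J k = F (J+1) 1`,
`F J i = F J (i+1) + q^((k-i)(J+1)) F (J+1) (k-i+1)` for `i < k`, and `F J i ≡ 1 mod q^(J+1)`;
these relations determine the coefficients by induction on the degree and, within a degree,
downwards in `J` and `i`. For the Lepowsky–Zhu series each relation holds summand by summand up
to a telescoping correction. For partitions, stripping the `c < k` parts equal to `J+1` leaves a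
partition with parts `> J+1`, and the condition at distance `k-1` across the cut says exactly that
`J+2` occurs at most `k-1-c` times.
-/

namespace PowerSeries

variable {R : Type*} [CommRing R]

theorem X_pow_dvd_prod_one_sub_X_pow_sub_one {s : Finset ℕ} {N : ℕ} (hs : ∀ m ∈ s, N ≤ m) :
    (X : R⟦X⟧) ^ N ∣ ∏ m ∈ s, (1 - X ^ m) - 1 := by
  refine Finset.prod_induction _ (fun f => (X : R⟦X⟧) ^ N ∣ f - 1) (fun f g hf hg => ?_)
    (by simp) (fun m hm => ?_)
  · have : f * g - 1 = f * (g - 1) + (f - 1) := by ring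
    exact this ▸ dvd_add (dvd_mul_of_dvd_right hg f) hf
  · simpa using (pow_dvd_pow X (hs m hm)).neg_right

theorem coeff_mul_of_X_pow_dvd_sub_one {f g : R⟦X⟧} {d : ℕ} (hg : X ^ (d + 1) ∣ g - 1) :
    coeff d (f * g) = coeff d f := by
  have : f * g = f + f * (g - 1) := by ring
  rw [this, map_add, X_pow_dvd_iff.1 (dvd_mul_of_dvd_right hg f) d d.lt_succ_self, add_zero]

end PowerSeries

theorem coeff_sProd_eq_coeff_prod (P : ℕ → Prop) [DecidablePred P] (s : Finset ℕ) {d : ℕ}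
    (hs : ∀ m ≤ d, m ∈ s ↔ P m) :
    coeff d (sProd P) = coeff d (∏ m ∈ s, (1 - X ^ m)) := by
  have hlow : s.filter (· ≤ d) = (range (d + 1)).filter P := by
    ext m
    simp only [mem_filter, mem_range]
    constructor
    · rintro ⟨hm, hmd⟩; exact ⟨by omega, (hs m hmd).1 hm⟩
    · rintro ⟨hmd, hm⟩; exact ⟨(hs m (by omega)).2 hm, by omega⟩
  rw [← prod_filter_mul_prod_filter_not s (· ≤ d), coeff_mul_of_X_pow_dvd_sub_one
    (X_pow_dvd_prod_one_sub_X_pow_sub_one fun m hm => by have := (mem_filter.1 hm).2; omega), hlow]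
  rw [sProd, coeff_mk]

theorem constantCoeff_sProd_one_le : constantCoeff (sProd (1 ≤ ·)) = 1 := by
  rw [← coeff_zero_eq_constantCoeff_apply, coeff_sProd_eq_coeff_prod _ ∅ (by simp)]
  simp

theorem X_pow_dvd_sProd_sub_prod (j : ℕ) :
    X ^ (j + 1) ∣ sProd (1 ≤ ·) - ∏ m ∈ Icc 1 j, (1 - X ^ m) := by
  refine X_pow_dvd_iff.2 fun d hd => ?_
  rw [map_sub, sub_eq_zero,
    coeff_sProd_eq_coeff_prod _ (Icc 1 j) fun m hm => by rw [mem_Icc]; omega]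

theorem coeff_sSum (f : ℕ → ℚ⟦X⟧) (d : ℕ) :
    coeff d (sSum f) = ∑ l ∈ range (d + 1), coeff d (f l) := by
  rw [sSum, coeff_mk, map_sum]

theorem sSum_add (f g : ℕ → ℚ⟦X⟧) : sSum (fun l => f l + g l) = sSum f + sSum g := by
  ext d
  simp only [coeff_sSum, map_add, sum_add_distrib]

theorem coeff_sSum_of_le {f : ℕ → ℚ⟦X⟧} (hf : ∀ l, X ^ l ∣ f l) {d N : ℕ} (hdN : d ≤ N) :
    coeff d (sSum f) = ∑ l ∈ range (N + 1), coeff d (f l) := by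
  rw [coeff_sSum]
  refine sum_subset (range_subset_range.2 (by omega)) fun l _ hl => ?_
  exact X_pow_dvd_iff.1 (hf l) d (by rw [mem_range] at hl; omega)

theorem sSum_X_pow_mul {f : ℕ → ℚ⟦X⟧} (hf : ∀ l, X ^ l ∣ f l) (g : ℕ) :
    sSum (fun l => X ^ g * f l) = X ^ g * sSum f := by
  ext d
  rw [coeff_sSum, coeff_X_pow_mul', coeff_sSum_of_le hf (Nat.sub_le d g)]
  simp only [coeff_X_pow_mul']
  split_ifs <;> simp

theorem sSum_sub_succ {v : ℕ → ℚ⟦X⟧} (hv : ∀ l, X ^ l ∣ v l) (h0 : v 0 = 0) :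
    sSum (fun l => v l - v (l + 1)) = 0 := by
  ext d
  rw [coeff_sSum, ← map_sum, sum_range_sub', h0, zero_sub, map_neg,
    X_pow_dvd_iff.1 (hv (d + 1)) d d.lt_succ_self, neg_zero, map_zero]

theorem X_pow_dvd_sSum_sub {f : ℕ → ℚ⟦X⟧} {N : ℕ} (hf : ∀ l, 1 ≤ l → X ^ N ∣ f l) :
    X ^ N ∣ sSum f - f 0 := by
  refine X_pow_dvd_iff.2 fun d hd => ?_
  rw [map_sub, coeff_sSum, sum_range_succ', sub_eq_zero, add_eq_right]
  exact sum_eq_zero fun l _ => X_pow_dvd_iff.1 (hf (l + 1) (by omega)) d hd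

def lzExp (k j i l : ℕ) : ℕ := (2 * k + 1) * l.choose 2 + (k * (j + 1) + i) * l

noncomputable def shiftedProd (j l : ℕ) : ℚ⟦X⟧ := ∏ t ∈ Icc 1 j, (1 - X ^ (l + t))

noncomputable def lzTerm (k j i l : ℕ) : ℚ⟦X⟧ :=
  (-1) ^ l * X ^ lzExp k j i l * shiftedProd j l * (1 - X ^ ((k - i + 1) * (2 * l + j + 1)))

noncomputable def lzCorrection (k j i l : ℕ) : ℚ⟦X⟧ :=
  (-1) ^ l * X ^ lzExp k j i l * (1 - X ^ l) * shiftedProd j l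

theorem gordonCf_eq (k j i : ℕ) : GordonCf k j i = (sProd (1 ≤ ·))⁻¹ * sSum (lzTerm k j i) := rfl

theorem lzExp_succ (k j i l : ℕ) :
    lzExp k j i (l + 1) = lzExp k j i l + (2 * k + 1) * l + (k * (j + 1) + i) := by
  simp only [lzExp, Nat.choose_succ_succ l 1, Nat.choose_one_right]
  ring

theorem shiftedProd_succ (j l : ℕ) :
    shiftedProd (j + 1) l = shiftedProd j l * (1 - X ^ (l + j + 1)) := by
  rw [shiftedProd, prod_Icc_succ_top (by omega), ← add_assoc]
  rfl

theorem one_sub_mul_shiftedProd_succ (j l : ℕ) :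
    (1 - X ^ (l + 1)) * shiftedProd j (l + 1) = shiftedProd j l * (1 - X ^ (l + j + 1)) := by
  induction j with
  | zero => simp [shiftedProd]
  | succ j ih =>
    rw [shiftedProd_succ, shiftedProd_succ, ← mul_assoc, ih]
    ring_nf

theorem lzCorrection_succ (k j i l : ℕ) : lzCorrection k j i (l + 1) =
    -((-1) ^ l * X ^ lzExp k j i (l + 1) * shiftedProd j l * (1 - X ^ (l + j + 1))) := by
  rw [lzCorrection, mul_assoc _ (1 - _), one_sub_mul_shiftedProd_succ]
  ring

theorem lzTerm_step {k j i : ℕ} (hi : 1 ≤ i) (hik : i < k) (l : ℕ) :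
    lzTerm k j i l =
      lzTerm k j (i + 1) l + X ^ ((k - i) * (j + 1)) * lzTerm k (j + 1) (k - i + 1) l +
        (lzCorrection k j i l - lzCorrection k j i (l + 1)) := by
  obtain ⟨c, rfl⟩ := Nat.exists_eq_add_of_lt hik
  have h1 : i + c + 1 - i = c + 1 := by omega
  have h2 : i + c + 1 - (i + 1) = c := by omega
  have h3 : i + c + 1 - (c + 1 + 1) = i - 1 := by omega
  rw [lzCorrection_succ, lzExp_succ]
  simp only [lzTerm, lzCorrection, shiftedProd_succ, lzExp, h1, h2, h3, Nat.sub_add_cancel hi]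
  ring

theorem lzTerm_shelf {k : ℕ} (hk : 1 ≤ k) (j l : ℕ) :
    lzTerm k j k l =
      lzTerm k (j + 1) 1 l + (lzCorrection k j k l - lzCorrection k j k (l + 1)) := by
  rw [lzCorrection_succ, lzExp_succ]
  simp only [lzTerm, lzCorrection, shiftedProd_succ, lzExp, Nat.sub_self, Nat.sub_add_cancel hk]
  ring

theorem lzTerm_zero (k j i : ℕ) :
    lzTerm k j i 0 = (∏ m ∈ Icc 1 j, (1 - X ^ m)) * (1 - X ^ ((k - i + 1) * (j + 1))) := by
  simp [lzTerm, lzExp, shiftedProd]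

theorem X_pow_dvd_lzTerm {k j i l N : ℕ} (hN : N ≤ lzExp k j i l) : X ^ N ∣ lzTerm k j i l :=
  dvd_mul_of_dvd_left (dvd_mul_of_dvd_left (dvd_mul_of_dvd_right (pow_dvd_pow X hN) _) _) _

theorem X_pow_dvd_lzCorrection {k j i l N : ℕ} (hN : N ≤ lzExp k j i l) :
    X ^ N ∣ lzCorrection k j i l :=
  dvd_mul_of_dvd_left (dvd_mul_of_dvd_left (dvd_mul_of_dvd_right (pow_dvd_pow X hN) _) _) _

theorem le_lzExp {i : ℕ} (hi : 1 ≤ i) (k j l : ℕ) : l ≤ lzExp k j i l :=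
  le_add_left (Nat.le_mul_of_pos_left l (by omega))

theorem succ_le_lzExp {k l : ℕ} (hk : 1 ≤ k) (hl : 1 ≤ l) (j i : ℕ) : j + 1 ≤ lzExp k j i l :=
  le_add_left <| (Nat.le_mul_of_pos_left _ hk).trans <|
    (Nat.le_add_right _ i).trans (Nat.le_mul_of_pos_right _ hl)

theorem sSum_lzTerm_step {k j i : ℕ} (hi : 1 ≤ i) (hik : i < k) :
    sSum (lzTerm k j i) =
      sSum (lzTerm k j (i + 1)) +
        X ^ ((k - i) * (j + 1)) * sSum (lzTerm k (j + 1) (k - i + 1)) := by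
  rw [funext (lzTerm_step hi hik), sSum_add, sSum_add, sSum_X_pow_mul, sSum_sub_succ, add_zero]
  · exact fun l => X_pow_dvd_lzCorrection (le_lzExp hi k j l)
  · simp [lzCorrection]
  · exact fun l => X_pow_dvd_lzTerm (le_lzExp (by omega) k (j + 1) l)

theorem sSum_lzTerm_shelf {k : ℕ} (hk : 1 ≤ k) (j : ℕ) :
    sSum (lzTerm k j k) = sSum (lzTerm k (j + 1) 1) := by
  rw [funext (lzTerm_shelf hk j), sSum_add, sSum_sub_succ, add_zero]
  · exact fun l => X_pow_dvd_lzCorrection (le_lzExp hk k j l)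
  · simp [lzCorrection]

theorem X_pow_dvd_sSum_lzTerm_sub {k : ℕ} (hk : 1 ≤ k) (j i : ℕ) :
    X ^ (j + 1) ∣ sSum (lzTerm k j i) - ∏ m ∈ Icc 1 j, (1 - X ^ m) := by
  have h0 : lzTerm k j i 0 - ∏ m ∈ Icc 1 j, (1 - X ^ m) =
      -(X ^ ((k - i + 1) * (j + 1)) * ∏ m ∈ Icc 1 j, (1 - X ^ m)) := by
    rw [lzTerm_zero]
    ring
  rw [← sub_add_sub_cancel _ (lzTerm k j i 0), h0]
  exact dvd_add (X_pow_dvd_sSum_sub fun l hl => X_pow_dvd_lzTerm (succ_le_lzExp hk hl j i))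
    (dvd_mul_of_dvd_left (pow_dvd_pow X (Nat.le_mul_of_pos_left _ (by omega))) _).neg_right

theorem gordonCf_step {k i : ℕ} (hi : 1 ≤ i) (hik : i < k) (j : ℕ) :
    GordonCf k j i =
      GordonCf k j (i + 1) + X ^ ((k - i) * (j + 1)) * GordonCf k (j + 1) (k - i + 1) := by
  rw [gordonCf_eq, gordonCf_eq, gordonCf_eq, sSum_lzTerm_step hi hik]
  ring

theorem gordonCf_shelf {k : ℕ} (hk : 1 ≤ k) (j : ℕ) : GordonCf k j k = GordonCf k (j + 1) 1 := by
  rw [gordonCf_eq, gordonCf_eq, sSum_lzTerm_shelf hk]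

theorem X_pow_dvd_gordonCf_sub_one {k : ℕ} (hk : 1 ≤ k) (j i : ℕ) :
    X ^ (j + 1) ∣ GordonCf k j i - 1 := by
  have hinv : (sProd (1 ≤ ·))⁻¹ * sProd (1 ≤ ·) = 1 :=
    PowerSeries.inv_mul_cancel _ (by rw [constantCoeff_sProd_one_le]; exact one_ne_zero)
  have hdiff := dvd_sub (X_pow_dvd_sSum_lzTerm_sub hk j i) (X_pow_dvd_sProd_sub_prod j)
  rw [sub_sub_sub_cancel_right] at hdiff
  rw [gordonCf_eq, ← hinv, ← mul_sub]
  exact dvd_mul_of_dvd_right hdiff _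

structure IsGordonFamily {R : Type*} [CommRing R] (k : ℕ) (F : ℕ → ℕ → R⟦X⟧) : Prop where
  shelf : ∀ J, F J k = F (J + 1) 1
  step : ∀ J i, 1 ≤ i → i < k →
    F J i = F J (i + 1) + X ^ ((k - i) * (J + 1)) * F (J + 1) (k - i + 1)
  X_pow_dvd_sub_one : ∀ J i, X ^ (J + 1) ∣ F J i - 1

namespace IsGordonFamily

variable {R : Type*} [CommRing R] {k : ℕ} {F G : ℕ → ℕ → R⟦X⟧}

theorem coeff_eq_of_le (hF : IsGordonFamily k F) (hG : IsGordonFamily k G) {n J : ℕ}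
    (hnJ : n ≤ J) (i : ℕ) : coeff n (F J i) = coeff n (G J i) := by
  have hF1 := X_pow_dvd_iff.1 (hF.X_pow_dvd_sub_one J i) n (by omega)
  have hG1 := X_pow_dvd_iff.1 (hG.X_pow_dvd_sub_one J i) n (by omega)
  rw [map_sub, sub_eq_zero] at hF1 hG1
  rw [hF1, hG1]

theorem coeff_eq_of_succ (hF : IsGordonFamily k F) (hG : IsGordonFamily k G) {n J : ℕ}
    (hlt : ∀ m < n, ∀ J i, 1 ≤ i → i ≤ k → coeff m (F J i) = coeff m (G J i))
    (hsucc : ∀ i, 1 ≤ i → i ≤ k → coeff n (F (J + 1) i) = coeff n (G (J + 1) i))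
    {i : ℕ} (hi : 1 ≤ i) (hik : i ≤ k) : coeff n (F J i) = coeff n (G J i) := by
  obtain ⟨s, hs⟩ := Nat.exists_eq_add_of_le hik
  induction s generalizing i with
  | zero => rw [show i = k by omega, hF.shelf, hG.shelf, hsucc 1 le_rfl (by omega)]
  | succ s ih =>
    have hg : 1 ≤ (k - i) * (J + 1) := Nat.mul_pos (by omega) J.succ_pos
    rw [hF.step J i hi (by omega), hG.step J i hi (by omega), map_add, map_add,
      ih (by omega) (by omega) (by omega), coeff_X_pow_mul', coeff_X_pow_mul']
    split_ifs
    · rw [hlt _ (by omega) _ _ (by omega) (by omega)]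
    · rfl

theorem eq (hF : IsGordonFamily k F) (hG : IsGordonFamily k G) {J i : ℕ} (hi : 1 ≤ i)
    (hik : i ≤ k) : F J i = G J i := by
  ext n
  induction n using Nat.strong_induction_on generalizing J i with | _ n ihn =>
  obtain ⟨d, hd⟩ : ∃ d, n ≤ J + d := ⟨n, by omega⟩
  induction d generalizing J i with
  | zero => exact hF.coeff_eq_of_le hG hd i
  | succ d ihd =>
    exact hF.coeff_eq_of_succ hG (fun m hm J i hi hik => ihn m hm hi hik)
      (fun i hi hik => ihd hi hik (by omega)) hi hik

end IsGordonFamily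

namespace List

theorem getD_mem_of_lt {α : Type*} {l : List α} {p : ℕ} (hp : p < l.length) (x : α) :
    l.getD p x ∈ l := by
  rw [getD_eq_getElem _ _ hp]
  exact getElem_mem hp

theorem Pairwise.eq_filter_lt_append_replicate {b : List ℕ} (hb : b.Pairwise (· ≥ ·)) {a : ℕ}
    (ha : ∀ x ∈ b, a ≤ x) : b = b.filter (a < ·) ++ replicate (b.count a) a := by
  have hperm : (b.filter (a < ·) ++ replicate (b.count a) a).Perm b := by
    rw [← filter_eq]
    convert filter_append_perm (a < ·) b using 2
    refine filter_congr fun x hx => ?_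
    have := ha x hx
    simp only [Bool.eq_not, ne_eq, decide_eq_decide]
    omega
  refine (hperm.eq_of_pairwise' (pairwise_append.2 ⟨hb.filter _, ?_, ?_⟩) hb).symm
  · exact pairwise_replicate.2 (Or.inr le_rfl)
  · intro x hx y hy
    rw [eq_of_mem_replicate hy]
    exact (of_decide_eq_true (mem_filter.1 hx).2).le

end List

def DiffTwoAtDistance (d : ℕ) (b : List ℕ) : Prop :=
  ∀ p, p + d < b.length → b.getD (p + d) 0 + 2 ≤ b.getD p 0

section DiffTwoAtDistance

variable {d a c : ℕ} {t : List ℕ}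

theorem DiffTwoAtDistance.of_append {r : List ℕ} (h : DiffTwoAtDistance d (t ++ r)) :
    DiffTwoAtDistance d t := fun p hp => by
  have := h p (by simp; omega)
  rwa [List.getD_append _ _ _ _ hp, List.getD_append _ _ _ _ (by omega)] at this

theorem DiffTwoAtDistance.count_add_le (ht : t.Pairwise (· ≥ ·)) (hta : ∀ x ∈ t, a < x)
    (h : DiffTwoAtDistance d (t ++ List.replicate c a)) : t.count (a + 1) + c ≤ d := by
  by_contra! hlong
  set s := t.count (a + 1)
  set u := t.filter (a + 1 < ·)
  have htu : t = u ++ List.replicate s (a + 1) := ht.eq_filter_lt_append_replicate hta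
  have hlen : t.length = u.length + s := by rw [htu]; simp
  -- the last `d + 1` parts all lie in `{a, a + 1}`
  set p := t.length + c - (d + 1)
  have hlast : a ≤ (t ++ List.replicate c a).getD (p + d) 0 := by
    rcases List.mem_append.1 (List.getD_mem_of_lt (l := t ++ List.replicate c a) (p := p + d)
      (by simp; omega) 0) with hx | hx
    · exact (hta _ hx).le
    · exact (List.eq_of_mem_replicate hx).ge
  have hfirst : (t ++ List.replicate c a).getD p 0 ≤ a + 1 := by
    rw [htu, List.append_assoc, List.getD_append_right _ _ _ _ (by omega)]
    rcases List.mem_append.1 (List.getD_mem_of_lt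
      (l := List.replicate s (a + 1) ++ List.replicate c a) (p := p - u.length) (by simp; omega) 0)
      with hx | hx
    · exact (List.eq_of_mem_replicate hx).le
    · exact (List.eq_of_mem_replicate hx).le.trans a.le_succ
  have := h p (by simp; omega)
  omega

theorem DiffTwoAtDistance.append_replicate (ht : t.Pairwise (· ≥ ·)) (hta : ∀ x ∈ t, a < x)
    (h : DiffTwoAtDistance d t) (hshort : t.count (a + 1) + c ≤ d) :
    DiffTwoAtDistance d (t ++ List.replicate c a) := by
  intro p hp
  simp only [List.length_append, List.length_replicate] at hp
  by_cases hpd : p + d < t.length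
  · rw [List.getD_append _ _ _ _ hpd, List.getD_append _ _ _ _ (by omega)]
    exact h p hpd
  set s := t.count (a + 1)
  set u := t.filter (a + 1 < ·)
  have htu : t = u ++ List.replicate s (a + 1) := ht.eq_filter_lt_append_replicate hta
  have hlen : t.length = u.length + s := by rw [htu]; simp
  rw [List.getD_append_right _ _ _ _ (by omega), List.getD_replicate _ (by omega), htu,
    List.append_assoc, List.getD_append _ _ _ _ (by omega)]
  have := of_decide_eq_true
    (List.mem_filter.1 (List.getD_mem_of_lt (l := u) (p := p) (by omega) 0)).2
  omega

theorem diffTwoAtDistance_append_replicate_iff (ht : t.Pairwise (· ≥ ·)) (hta : ∀ x ∈ t, a < x) :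
    DiffTwoAtDistance d (t ++ List.replicate c a) ↔
      DiffTwoAtDistance d t ∧ t.count (a + 1) + c ≤ d :=
  ⟨fun h => ⟨h.of_append, h.count_add_le ht hta⟩, fun h => h.1.append_replicate ht hta h.2⟩

end DiffTwoAtDistance

def IsGordonPartition (k J n m : ℕ) (b : List ℕ) : Prop :=
  b.Pairwise (· ≥ ·) ∧ (∀ x ∈ b, 0 < x) ∧ b.sum = n ∧ DiffTwoAtDistance (k - 1) b ∧
    (∀ x ∈ b, J < x) ∧ b.count (J + 1) ≤ m

instance (k J n m : ℕ) : Finite {b // IsGordonPartition k J n m b} :=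
  Finite.of_injective
    (fun b => (⟨b.1, fun hx => b.2.2.1 _ hx, by simpa using b.2.2.2.1⟩ : n.Partition))
    fun b b' h => Subtype.ext <|
      (Multiset.coe_eq_coe.1 (congrArg Nat.Partition.parts h)).eq_of_pairwise' b.2.1 b'.2.1

instance (k J n c : ℕ) : Finite {b // IsGordonPartition k J n c b ∧ b.count (J + 1) = c} :=
  Finite.of_injective (fun b => (⟨b.1, b.2.1⟩ : {b // IsGordonPartition k J n c b}))
    fun _ _ h => Subtype.ext (congrArg (·.val) h :)

theorem IsGordonPartition.count_le {k J n m : ℕ} {b : List ℕ} (h : IsGordonPartition k J n m b) :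
    b.count (J + 1) ≤ m :=
  h.2.2.2.2.2

theorem IsGordonPartition.of_count_le {k J n m m' : ℕ} {b : List ℕ}
    (h : IsGordonPartition k J n m b) (hm : b.count (J + 1) ≤ m') : IsGordonPartition k J n m' b :=
  ⟨h.1, h.2.1, h.2.2.1, h.2.2.2.1, h.2.2.2.2.1, hm⟩

theorem IsGordonPartition.eq_filter_append_replicate {k J n m : ℕ} {b : List ℕ}
    (h : IsGordonPartition k J n m b) :
    b = b.filter (J + 1 < ·) ++ List.replicate (b.count (J + 1)) (J + 1) :=
  h.1.eq_filter_lt_append_replicate h.2.2.2.2.1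

noncomputable def gordonSeries (k J m : ℕ) : ℚ⟦X⟧ :=
  mk fun n => Nat.card {b // IsGordonPartition k J n m b}

noncomputable def gordonExactSeries (k J c : ℕ) : ℚ⟦X⟧ :=
  mk fun n => Nat.card {b // IsGordonPartition k J n c b ∧ b.count (J + 1) = c}

theorem gordonSeries_zero (k J : ℕ) : gordonSeries k J 0 = gordonExactSeries k J 0 := by
  ext n
  simp only [gordonSeries, gordonExactSeries, coeff_mk, Nat.cast_inj]
  exact Nat.card_congr <| Equiv.subtypeEquivRight fun b =>
    ⟨fun h => ⟨h, by have := h.count_le; omega⟩, And.left⟩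

theorem gordonSeries_succ (k J c : ℕ) :
    gordonSeries k J (c + 1) = gordonSeries k J c + gordonExactSeries k J (c + 1) := by
  ext n
  simp only [gordonSeries, gordonExactSeries, coeff_mk, map_add, ← Nat.cast_add, Nat.cast_inj]
  classical
  rw [← Nat.card_sum]
  refine Nat.card_congr <| (Equiv.subtypeEquivRight fun b => ?_).trans (subtypeOrEquiv _ _ ?_)
  · refine ⟨fun h => ?_, fun h => h.elim (fun h => h.of_count_le (by have := h.count_le; omega))
      And.left⟩
    by_cases hc : b.count (J + 1) = c + 1
    · exact .inr ⟨h, hc⟩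
    · exact .inl (h.of_count_le (by have := h.count_le; omega))
  · refine Pi.disjoint_iff.2 fun b => Prop.disjoint_iff.2 fun ⟨h, _, h'⟩ => ?_
    have := h.count_le
    omega

theorem Nat.card_subtype_eq_card_append_right {α : Type*} (P : List α → Prop) (r : List α)
    (h : ∀ b, P b → ∃ t, b = t ++ r) : Nat.card {b // P b} = Nat.card {t // P (t ++ r)} := by
  refine (Nat.card_congr <| Equiv.ofBijective (fun t => ⟨t.1 ++ r, t.2⟩)
    ⟨fun t t' htt' => ?_, fun b => ?_⟩).symm
  · exact Subtype.ext (List.append_cancel_right (congrArg (·.val) htt'))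
  · obtain ⟨t, ht⟩ := h b.1 b.2
    exact ⟨⟨t, ht ▸ b.2⟩, Subtype.ext ht.symm⟩

theorem isGordonPartition_append_replicate_iff {k J n c : ℕ} (hc : c < k) {t : List ℕ} :
    IsGordonPartition k J n c (t ++ List.replicate c (J + 1)) ∧
        (t ++ List.replicate c (J + 1)).count (J + 1) = c ↔
      IsGordonPartition k (J + 1) (n - c * (J + 1)) (k - 1 - c) t ∧ c * (J + 1) ≤ n := by
  have hcount : (t ++ List.replicate c (J + 1)).count (J + 1) = t.count (J + 1) + c := by
    simp [List.count_append, List.count_replicate_self]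
  have hsum : (t ++ List.replicate c (J + 1)).sum = t.sum + c * (J + 1) := by
    simp [List.sum_append, List.sum_replicate]
  rw [hcount]
  constructor
  · rintro ⟨⟨hsort, hpos, hn, hgap, hJ, -⟩, hc'⟩
    have htJ : ∀ x ∈ t, J + 1 < x := fun x hx =>
      lt_of_le_of_ne (hJ x (List.mem_append_left _ hx)) fun hJx =>
        List.count_eq_zero.1 (by omega) (hJx ▸ hx)
    have htsort := (List.pairwise_append.1 hsort).1
    obtain ⟨hgap, hcnt⟩ := (diffTwoAtDistance_append_replicate_iff htsort htJ).1 hgap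
    exact ⟨⟨htsort, fun x hx => hpos x (List.mem_append_left _ hx), by omega, hgap, htJ, by omega⟩,
      by omega⟩
  · rintro ⟨⟨hsort, hpos, hn, hgap, hJ, hcnt⟩, hcn⟩
    have ht0 : t.count (J + 1) = 0 := List.count_eq_zero.2 fun h => lt_irrefl _ (hJ _ h)
    refine ⟨⟨List.pairwise_append.2 ⟨hsort, List.pairwise_replicate.2 (.inr le_rfl), ?_⟩, ?_,
      by omega, (diffTwoAtDistance_append_replicate_iff hsort hJ).2 ⟨hgap, by omega⟩, ?_, by omega⟩,
      by omega⟩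
    · intro x hx y hy
      rw [List.eq_of_mem_replicate hy]
      exact (hJ x hx).le
    · intro x hx
      rcases List.mem_append.1 hx with hx | hx
      · exact hpos x hx
      · rw [List.eq_of_mem_replicate hx]; exact J.succ_pos
    · intro x hx
      rcases List.mem_append.1 hx with hx | hx
      · exact (hJ x hx).trans' J.lt_succ_self
      · rw [List.eq_of_mem_replicate hx]; exact J.lt_succ_self

theorem gordonExactSeries_eq {k c : ℕ} (hc : c < k) (J : ℕ) :
    gordonExactSeries k J c = X ^ (c * (J + 1)) * gordonSeries k (J + 1) (k - 1 - c) := by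
  ext n
  rw [coeff_X_pow_mul']
  simp only [gordonExactSeries, gordonSeries, coeff_mk]
  rw [Nat.card_subtype_eq_card_append_right _ (List.replicate c (J + 1)) fun b hb =>
    ⟨_, hb.2 ▸ hb.1.eq_filter_append_replicate⟩]
  simp_rw [isGordonPartition_append_replicate_iff hc]
  split_ifs with hn
  · simp only [hn, and_true]
  · simp [hn]

theorem isGordonPartition_iff_of_le {k J n m : ℕ} (hn : n ≤ J) {b : List ℕ} :
    IsGordonPartition k J n m b ↔ b = [] ∧ n = 0 := by
  constructor
  · rintro ⟨-, -, rfl, -, hJ, -⟩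
    cases b with
    | nil => simp
    | cons x xs =>
      have := hJ x List.mem_cons_self
      have := List.le_sum_of_mem (List.mem_cons_self (a := x) (l := xs))
      omega
  · rintro ⟨rfl, rfl⟩
    simp [IsGordonPartition, DiffTwoAtDistance]

theorem X_pow_dvd_gordonSeries_sub_one (k J m : ℕ) : X ^ (J + 1) ∣ gordonSeries k J m - 1 := by
  refine X_pow_dvd_iff.2 fun n hn => ?_
  rw [map_sub, sub_eq_zero, coeff_one, gordonSeries, coeff_mk]
  simp_rw [isGordonPartition_iff_of_le (show n ≤ J by omega)]
  split_ifs with h <;> simp [h]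

theorem isGordonFamily_gordonSeries {k : ℕ} (hk : 1 ≤ k) :
    IsGordonFamily k fun J i => gordonSeries k J (k - i) where
  shelf J := by
    rw [Nat.sub_self, gordonSeries_zero, gordonExactSeries_eq hk, zero_mul, pow_zero, one_mul,
      Nat.sub_zero]
  step J i hi hik := by
    obtain ⟨c, hc⟩ : ∃ c, k - i = c + 1 := ⟨k - i - 1, by omega⟩
    rw [hc, gordonSeries_succ, gordonExactSeries_eq (by omega), show k - (i + 1) = c by omega,
      show k - (c + 1 + 1) = k - 1 - (c + 1) by omega]
  X_pow_dvd_sub_one J i := X_pow_dvd_gordonSeries_sub_one k J (k - i)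

theorem isGordonFamily_gordonCf {k : ℕ} (hk : 1 ≤ k) : IsGordonFamily k (GordonCf k) where
  shelf := gordonCf_shelf hk
  step J _ hi hik := gordonCf_step hi hik J
  X_pow_dvd_sub_one := X_pow_dvd_gordonCf_sub_one hk

theorem gordon_shelf_combinatorics_general (k J i : ℕ) (hi1 : 1 ≤ i) (hik : i ≤ k) :
    ∀ n : ℕ, PowerSeries.coeff n (GordonCf k J i) =
      (Nat.card {b : List ℕ // b.Pairwise (· ≥ ·) ∧ (∀ x ∈ b, 0 < x) ∧ b.sum = n ∧
        (∀ p, p + (k - 1) < b.length →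
          b.getD (p + (k - 1)) 0 + 2 ≤ b.getD p 0) ∧
        (∀ x ∈ b, J < x) ∧
        b.count (J + 1) ≤ k - i} : ℚ) := by
  intro n
  have hk : 1 ≤ k := hi1.trans hik
  rw [(isGordonFamily_gordonCf hk).eq (isGordonFamily_gordonSeries hk) hi1 hik]
  exact coeff_mk _ _

/-- The shelf-`J` series `G_{(k-1)J+i}(q)` for Gordon's identities is the
generating function for partitions with difference at least `2` at distance
`k-1`, smallest part greater than `J`, and part `J+1` appearing at most `k-i`
times. -/
theorem gordon_shelf_combinatorics (k J i : ℕ) (hk : 2 ≤ k) (hi1 : 1 ≤ i) (hik : i ≤ k) :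
    ∀ n : ℕ, PowerSeries.coeff n (GordonCf k J i) =
      (Nat.card {b : List ℕ // b.Pairwise (· ≥ ·) ∧ (∀ x ∈ b, 0 < x) ∧ b.sum = n ∧
        (∀ p, p + (k - 1) < b.length →
          b.getD (p + (k - 1)) 0 + 2 ≤ b.getD p 0) ∧
        (∀ x ∈ b, J < x) ∧
        b.count (J + 1) ≤ k - i} : ℚ) :=
  gordon_shelf_combinatorics_general k J i hi1 hik
end

section
/- For k ≥ 2, j ≥ 0, and 1 ≤ i ≤ k, define G_{(k-1)j+i}(q) = [∑_{λ≥0} (-1)^λ q^{(2k+1)·C(λ,2)+(k(j+1)+i)λ}(1−q^{λ+1})⋯(1−q^{λ+j})(1−q^{(k-i+1)(2λ+j+1)})] / ∏_{n≥1}(1−q^n). Then if 1 ≤ i ≤ k−1, G_{(k-1)j+i}(q) = 1 + q^{j+1} + (higher order terms), and if i = k, G_{(k-1)j+k}(q) = 1 + q^{j+2} + (higher order terms); in particular G_{(k-1)j+i}(q) − 1 ∈ q^{j+1}ℤ[[q]] for i < k and ∈ q^{j+2}ℤ[[q]] for i = k. -/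
/-!
Write `G = N / P` with `P = ∏_{n ≥ 1} (1 - q^n)`. Modulo `q^{j+3}` only the `λ = 0` summand of
`N` survives, namely `A (1 - q^M)` with `A = ∏_{t ≤ j} (1 - q^t)` and `M = (k-i+1)(j+1)`, while
`P ≡ A (1 - q^{j+1}) (1 - q^{j+2})`. Hence `G ≡ T` as soon as
`1 - q^M ≡ T (1 - q^{j+1}) (1 - q^{j+2})`, which is a direct check for `T = 1 + q^{j+1}` modulo
`q^{j+2}` when `i < k` (so `M ≥ 2j + 2`) and for `T = 1 + q^{j+2}` modulo `q^{j+3}` when `i = k`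
(so `M = j + 1`). As `P` has constant term `1`, all of this takes place in `ℤ⟦q⟧`.
-/

open PowerSeries Finset

namespace Gordon

variable {R : Type*} [CommRing R]

-- `sProd P` and `sSum f` are `truncProd ℚ P` and `truncSum f` by definition.
noncomputable def truncProd (R : Type*) [CommRing R] (P : ℕ → Prop) [DecidablePred P] : R⟦X⟧ :=
  mk fun d => coeff d (∏ m ∈ (range (d + 1)).filter P, (1 - X ^ m))

noncomputable def truncSum (f : ℕ → R⟦X⟧) : R⟦X⟧ :=
  mk fun d => coeff d (∑ n ∈ range (d + 1), f n)

theorem X_pow_dvd_prod_one_sub_X_pow_sub_one {s : Finset ℕ} {n : ℕ} (h : ∀ m ∈ s, n ≤ m) :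
    (X : R⟦X⟧) ^ n ∣ ∏ m ∈ s, (1 - X ^ m) - 1 := by
  refine Finset.prod_induction _ (fun f => (X : R⟦X⟧) ^ n ∣ f - 1) (fun f g hf hg => ?_)
    (by simp) (fun m hm => ?_)
  · rw [show f * g - 1 = (f - 1) * g + (g - 1) by ring]
    exact dvd_add (hf.mul_right g) hg
  · rw [sub_sub_cancel_left, dvd_neg]
    exact pow_dvd_pow X (h m hm)

theorem X_pow_dvd_prod_one_sub_X_pow_sub_of_subset {s t : Finset ℕ} {n : ℕ} (hst : s ⊆ t)
    (h : ∀ m ∈ t \ s, n ≤ m) :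
    (X : R⟦X⟧) ^ n ∣ ∏ m ∈ t, (1 - X ^ m) - ∏ m ∈ s, (1 - X ^ m) := by
  rw [← prod_sdiff hst, ← sub_one_mul]
  exact (X_pow_dvd_prod_one_sub_X_pow_sub_one h).mul_right _

theorem X_pow_dvd_truncProd_sub (P : ℕ → Prop) [DecidablePred P] (d : ℕ) :
    (X : R⟦X⟧) ^ (d + 1) ∣ truncProd R P - ∏ m ∈ (range (d + 1)).filter P, (1 - X ^ m) := by
  refine X_pow_dvd_iff.mpr fun e he => ?_
  rw [map_sub, truncProd, coeff_mk, ← map_sub]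
  refine X_pow_dvd_iff.mp ?_ e (Nat.lt_succ_self e)
  rw [← dvd_neg, neg_sub]
  refine X_pow_dvd_prod_one_sub_X_pow_sub_of_subset (filter_subset_filter _ ?_) fun m hm => ?_
  · exact range_subset_range.mpr he
  · simp only [mem_sdiff, mem_filter, mem_range, not_and] at hm
    by_contra! hlt
    exact hm.2 (by omega) hm.1.2

theorem constantCoeff_truncProd {P : ℕ → Prop} [DecidablePred P] (h : ¬ P 0) :
    constantCoeff (truncProd R P) = 1 := by
  rw [← coeff_zero_eq_constantCoeff_apply, truncProd, coeff_mk]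
  simp [filter_singleton, h]

theorem X_pow_dvd_truncSum_sub {f : ℕ → R⟦X⟧} {n : ℕ} (h : ∀ l, 1 ≤ l → (X : R⟦X⟧) ^ n ∣ f l) :
    (X : R⟦X⟧) ^ n ∣ truncSum f - f 0 := by
  refine X_pow_dvd_iff.mpr fun d hd => ?_
  rw [map_sub, truncSum, coeff_mk, sum_range_succ', map_add, map_sum, add_sub_cancel_right]
  exact sum_eq_zero fun l _ => X_pow_dvd_iff.mp (h (l + 1) (Nat.le_add_left 1 l)) d hd

theorem map_truncProd {S : Type*} [CommRing S] (φ : R →+* S) (P : ℕ → Prop) [DecidablePred P] :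
    map φ (truncProd R P) = truncProd S P := by
  ext d
  rw [coeff_map, truncProd, truncProd, coeff_mk, coeff_mk, ← coeff_map, map_prod]
  simp

theorem map_truncSum {S : Type*} [CommRing S] (φ : R →+* S) (f : ℕ → R⟦X⟧) :
    map φ (truncSum f) = truncSum fun n => map φ (f n) := by
  ext d
  rw [coeff_map, truncSum, truncSum, coeff_mk, coeff_mk, ← coeff_map, map_sum]

noncomputable def gordonTerm (R : Type*) [CommRing R] (k j i l : ℕ) : R⟦X⟧ :=
  (-1 : R⟦X⟧) ^ l * X ^ ((2 * k + 1) * l.choose 2 + (k * (j + 1) + i) * l) *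
    (∏ t ∈ Icc 1 j, (1 - X ^ (l + t))) * (1 - X ^ ((k - i + 1) * (2 * l + j + 1)))

noncomputable def gordonSeries (R : Type*) [CommRing R] (k j i : ℕ) : R⟦X⟧ :=
  invOfUnit (truncProd R (1 ≤ ·)) 1 * truncSum (gordonTerm R k j i)

theorem gordonTerm_zero (k j i : ℕ) :
    gordonTerm R k j i 0 = (∏ t ∈ Icc 1 j, (1 - X ^ t)) * (1 - X ^ ((k - i + 1) * (j + 1))) := by
  simp [gordonTerm]

theorem X_pow_dvd_gordonTerm (k j i : ℕ) {l : ℕ} (hl : 1 ≤ l) :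
    (X : R⟦X⟧) ^ (k * (j + 1) + i) ∣ gordonTerm R k j i l := by
  have hexp : k * (j + 1) + i ≤ (2 * k + 1) * l.choose 2 + (k * (j + 1) + i) * l :=
    le_add_left (Nat.le_mul_of_pos_right _ hl)
  exact (((pow_dvd_pow X hexp).mul_left _).mul_right _).mul_right _

theorem GordonCf_eq_map (k j i : ℕ) :
    GordonCf k j i = map (Int.castRingHom ℚ) (gordonSeries ℤ k j i) := by
  have hP : map (Int.castRingHom ℚ) (truncProd ℤ (1 ≤ ·)) = sProd (1 ≤ ·) := map_truncProd _ _
  have hinv : (sProd (1 ≤ ·))⁻¹ = map (Int.castRingHom ℚ) (invOfUnit (truncProd ℤ (1 ≤ ·)) 1) := by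
    rw [PowerSeries.inv_eq_iff_mul_eq_one, ← hP, ← map_mul, invOfUnit_mul, map_one]
    · simp [constantCoeff_truncProd]
    · change constantCoeff (truncProd ℚ (1 ≤ ·)) ≠ 0
      rw [constantCoeff_truncProd (by omega)]
      exact one_ne_zero
  rw [GordonCf, hinv, gordonSeries, map_mul, map_truncSum]
  congr 2
  ext l : 1
  simp [gordonTerm, map_prod]

theorem X_pow_dvd_truncProd_one_le_sub (j : ℕ) :
    (X : R⟦X⟧) ^ (j + 3) ∣
      truncProd R (1 ≤ ·) - (∏ t ∈ Icc 1 j, (1 - X ^ t)) * (1 - X ^ (j + 1)) * (1 - X ^ (j + 2)) := by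
  have hrange : (range (j + 2 + 1)).filter (1 ≤ ·) = Icc 1 (j + 2) := by
    ext m
    simp only [mem_filter, mem_range, mem_Icc]
    omega
  rw [← prod_Icc_succ_top (by omega), ← prod_Icc_succ_top (by omega), ← hrange]
  exact X_pow_dvd_truncProd_sub _ (j + 2)

theorem X_pow_dvd_gordonSeries_sub (k j i : ℕ) {n : ℕ} (T : R⟦X⟧) (hn : n ≤ j + 3)
    (hni : n ≤ k * (j + 1) + i)
    (hT : (X : R⟦X⟧) ^ n ∣
      (1 - X ^ ((k - i + 1) * (j + 1))) - T * ((1 - X ^ (j + 1)) * (1 - X ^ (j + 2)))) :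
    (X : R⟦X⟧) ^ n ∣ gordonSeries R k j i - T := by
  set A : R⟦X⟧ := ∏ t ∈ Icc 1 j, (1 - X ^ t)
  set b : R⟦X⟧ := (1 - X ^ (j + 1)) * (1 - X ^ (j + 2))
  set c : R⟦X⟧ := 1 - X ^ ((k - i + 1) * (j + 1))
  set P := truncProd R (1 ≤ ·)
  set N := truncSum (gordonTerm R k j i)
  have hN : (X : R⟦X⟧) ^ n ∣ N - A * c :=
    gordonTerm_zero (R := R) k j i ▸ X_pow_dvd_truncSum_sub fun l hl =>
      (pow_dvd_pow X hni).trans (X_pow_dvd_gordonTerm k j i hl)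
  have hP : (X : R⟦X⟧) ^ n ∣ P - A * b := by
    rw [← mul_assoc]
    exact (pow_dvd_pow X hn).trans (X_pow_dvd_truncProd_one_le_sub j)
  have hinv : invOfUnit P 1 * P = 1 :=
    invOfUnit_mul _ _ (by simp [P, constantCoeff_truncProd])
  have key : gordonSeries R k j i - T =
      invOfUnit P 1 * ((N - A * c) - T * (P - A * b) + A * (c - T * b)) := by
    rw [gordonSeries]
    linear_combination T * hinv
  rw [key]
  exact (dvd_add (dvd_sub hN (hP.mul_left T)) (hT.mul_left A)).mul_left _

theorem X_pow_dvd_gordonSeries_sub_of_lt {k i : ℕ} (hi : 1 ≤ i) (hik : i < k) (j : ℕ) :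
    (X : R⟦X⟧) ^ (j + 2) ∣ gordonSeries R k j i - (1 + X ^ (j + 1)) := by
  have hkj : j + 1 ≤ k * (j + 1) := Nat.le_mul_of_pos_left _ (by omega)
  have hM : j + 2 ≤ (k - i + 1) * (j + 1) :=
    calc j + 2 ≤ 2 * (j + 1) := by omega
      _ ≤ (k - i + 1) * (j + 1) := Nat.mul_le_mul_right _ (by omega)
  obtain ⟨c, hc⟩ := Nat.exists_eq_add_of_le hM
  refine X_pow_dvd_gordonSeries_sub k j i _ (by omega) (by omega)
    ⟨1 + X ^ j - X ^ c - X ^ (2 * j + 2), ?_⟩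
  rw [hc]
  ring

theorem X_pow_dvd_gordonSeries_self_sub {k : ℕ} (hk : 2 ≤ k) (j : ℕ) :
    (X : R⟦X⟧) ^ (j + 3) ∣ gordonSeries R k j k - (1 + X ^ (j + 2)) := by
  have hkj : 2 * (j + 1) ≤ k * (j + 1) := Nat.mul_le_mul_right _ hk
  refine X_pow_dvd_gordonSeries_sub k j k _ le_rfl (by omega)
    ⟨X ^ (j + 1) * (1 - X ^ (j + 1)), ?_⟩
  rw [Nat.sub_self, zero_add, one_mul]
  ring

end Gordon

/-- The strengthened Empirical Hypothesis for the Gordon identities: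
`G_{(k-1)j+i}(q) = 1 + q^{j+1} + (higher order terms)` with integer
coefficients for `1 ≤ i ≤ k-1`, and
`G_{(k-1)j+k}(q) = 1 + q^{j+2} + (higher order terms)`; in particular
`G_{(k-1)j+i}(q) - 1 ∈ q^{j+1} ℤ⟦q⟧` for `i < k` and `∈ q^{j+2} ℤ⟦q⟧` for `i = k`. -/
theorem gordon_strong_EH (k j : ℕ) (hk : 2 ≤ k) :
    (∀ i, 1 ≤ i → i ≤ k - 1 → ∃ γ : PowerSeries ℤ,
      GordonCf k j i = 1 + PowerSeries.X ^ (j + 1) +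
        PowerSeries.X ^ (j + 2) * PowerSeries.map (Int.castRingHom ℚ) γ) ∧
    (∃ γ : PowerSeries ℤ,
      GordonCf k j k = 1 + PowerSeries.X ^ (j + 2) +
        PowerSeries.X ^ (j + 3) * PowerSeries.map (Int.castRingHom ℚ) γ) := by
  constructor
  · intro i hi hik
    obtain ⟨γ, hγ⟩ := Gordon.X_pow_dvd_gordonSeries_sub_of_lt (R := ℤ) hi (show i < k by omega) j
    exact ⟨γ, by rw [Gordon.GordonCf_eq_map, sub_eq_iff_eq_add'.mp hγ]; simp⟩
  · obtain ⟨γ, hγ⟩ := Gordon.X_pow_dvd_gordonSeries_self_sub (R := ℤ) hk j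
    exact ⟨γ, by rw [Gordon.GordonCf_eq_map, sub_eq_iff_eq_add'.mp hγ]; simp⟩
end
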